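/- arXiv:1603.06361 — 7 statements merged into one kernel-verified Lean document; each statement's English description precedes it below -/
import Mathlib

section
/- Let X ⊆ Y and A be finite-dimensional real Banach spaces, Z a Banach space, e : X → A an isometric embedding, T : Y → Z a linear operator with ‖T‖ ≤ r for some r > 1, and π : A → Z a nonexpansive linear operator such that π ∘ e = T ↾ X. Then there exist a finite-dimensional Banach space C, an isometric embedding i_A : A → C, an (r−1)-isometric embedding i_Y : Y → C, and a nonexpansive linear operator π' : C → Z such that i_A ∘ e = i_Y ↾ X, π' ∘ i_A = π, and π' ∘ i_Y = T. -/
/-!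
`C` is the pushout of `e : X → A` and `r • (X ↪ Y)` among normed spaces and contractions: the
`ℓ¹`-sum `A ⊕₁ Y` modulo `{(e x, -r x)}`, with `i_A = inl` and `i_Y = inr ∘ (r • ·)`. Since
`‖e x‖ ≤ ‖r x‖`, identifying `e x` with `r x` shortens no element of `A`, so `i_A` is isometric;
since `‖r x‖ ≤ r ‖e x‖`, it shortens elements of `Y` by a factor at most `r`, so
`‖y‖ ≤ ‖i_Y y‖ ≤ r ‖y‖`. The operator `π'` is induced by `(π, r⁻¹ T)`, both of norm at most `1`,
hence nonexpansive on the `ℓ¹`-sum and on its quotient.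
-/

structure FinDimBanach where
  carrier : Type
  [nacg : NormedAddCommGroup carrier]
  [nsp : NormedSpace ℝ carrier]
  [fd : FiniteDimensional ℝ carrier]

attribute [instance] FinDimBanach.nacg FinDimBanach.nsp FinDimBanach.fd

instance : CoeSort FinDimBanach Type := ⟨FinDimBanach.carrier⟩

namespace FinDimBanach

variable (Q : Type*) [NormedAddCommGroup Q] [NormedSpace ℝ Q] [FiniteDimensional ℝ Q]

/-- A copy of `Q` in `Type`, where the carrier of a `FinDimBanach` has to live. -/
def Model : Type := Fin (Module.finrank ℝ Q) → ℝ

noncomputable instance : AddCommGroup (Model Q) := inferInstanceAs (AddCommGroup (Fin _ → ℝ))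

noncomputable instance : Module ℝ (Model Q) := inferInstanceAs (Module ℝ (Fin _ → ℝ))

noncomputable def Model.equiv : Q ≃ₗ[ℝ] Model Q := (Module.finBasis ℝ Q).equivFun

noncomputable instance : NormedAddCommGroup (Model Q) :=
  NormedAddCommGroup.induced _ Q (Model.equiv Q).symm (Model.equiv Q).symm.injective

noncomputable instance : NormedSpace ℝ (Model Q) :=
  NormedSpace.induced ℝ _ Q (Model.equiv Q).symm.toLinearMap

instance : FiniteDimensional ℝ (Model Q) := (Model.equiv Q).finiteDimensional

theorem exists_linearIsometryEquiv : ∃ C : FinDimBanach, Nonempty (Q ≃ₗᵢ[ℝ] C) :=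
  ⟨⟨Model Q⟩, ⟨{ Model.equiv Q with
    norm_map' := fun q => congrArg norm ((Model.equiv Q).symm_apply_apply q) }⟩⟩

end FinDimBanach

section

variable {𝕜 M N : Type*} [NontriviallyNormedField 𝕜] [SeminormedAddCommGroup M] [NormedSpace 𝕜 M]
  [SeminormedAddCommGroup N] [NormedSpace 𝕜 N]

theorem Submodule.norm_liftQL_le (S : Submodule 𝕜 M) (f : M →L[𝕜] N)
    (h : S ≤ LinearMap.ker (f : M →ₗ[𝕜] N)) : ‖S.liftQL f h‖ ≤ ‖f‖ := by
  refine ContinuousLinearMap.opNorm_le_bound _ (norm_nonneg f) fun w => ?_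
  let F := (f : M →+ N).mkNormedAddGroupHom ‖f‖ f.le_opNorm
  calc ‖S.liftQL f h w‖ ≤ ‖F‖ * ‖w‖ := QuotientAddGroup.norm_lift_apply_le F (fun x hx => h hx) w
    _ ≤ ‖f‖ * ‖w‖ := by gcongr; exact AddMonoidHom.mkNormedAddGroupHom_norm_le _ (norm_nonneg f) _

end

section L1Pushout

variable {𝕜 X A B : Type*} [NontriviallyNormedField 𝕜] [AddCommGroup X] [Module 𝕜 X]
  [SeminormedAddCommGroup A] [NormedSpace 𝕜 A] [SeminormedAddCommGroup B] [NormedSpace 𝕜 B]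
  (u : X →ₗ[𝕜] A) (v : X →ₗ[𝕜] B)

def L1Pushout.rel : Submodule 𝕜 (WithLp 1 (A × B)) :=
  LinearMap.range ((WithLp.linearEquiv 1 𝕜 (A × B)).symm.toLinearMap ∘ₗ u.prod (-v))

abbrev L1Pushout := WithLp 1 (A × B) ⧸ L1Pushout.rel u v

namespace L1Pushout

def mk : WithLp 1 (A × B) →ₗ[𝕜] L1Pushout u v := (rel u v).mkQ

def inl : A →ₗ[𝕜] L1Pushout u v :=
  mk u v ∘ₗ (WithLp.linearEquiv 1 𝕜 (A × B)).symm.toLinearMap ∘ₗ LinearMap.inl 𝕜 A B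

def inr : B →ₗ[𝕜] L1Pushout u v :=
  mk u v ∘ₗ (WithLp.linearEquiv 1 𝕜 (A × B)).symm.toLinearMap ∘ₗ LinearMap.inr 𝕜 A B

theorem inl_apply_eq_inr_apply (x : X) : inl u v (u x) = inr u v (v x) := by
  refine (Submodule.Quotient.eq _).2 ⟨x, WithLp.ofLp_injective 1 ?_⟩
  simp

variable {u v}

theorem le_norm_mk {c : ℝ} {a : A} {b : B} (h : ∀ x, c ≤ ‖a + u x‖ + ‖b - v x‖) :
    c ≤ ‖mk u v (WithLp.toLp 1 (a, b))‖ := by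
  refine QuotientAddGroup.le_norm_iff.2 fun m hm => ?_
  obtain ⟨x, hx⟩ := (Submodule.Quotient.eq _).1 hm
  have : m = WithLp.toLp 1 (a + u x, b - v x) := by
    rw [← sub_add_cancel m (WithLp.toLp 1 (a, b)), ← hx]
    refine WithLp.ofLp_injective 1 ?_
    simp [add_comm, sub_eq_neg_add]
  rw [this, WithLp.prod_norm_eq_of_L1]
  exact h x

theorem norm_inl_le (a : A) : ‖inl u v a‖ ≤ ‖a‖ :=
  (Submodule.Quotient.norm_mk_le _ _).trans_eq (by simp)

theorem norm_inr_le (b : B) : ‖inr u v b‖ ≤ ‖b‖ :=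
  (Submodule.Quotient.norm_mk_le _ _).trans_eq (by simp)

theorem norm_inl (h : ∀ x, ‖u x‖ ≤ ‖v x‖) (a : A) : ‖inl u v a‖ = ‖a‖ := by
  refine (norm_inl_le a).antisymm (le_norm_mk fun x => ?_)
  calc ‖a‖ ≤ ‖a + u x‖ + ‖u x‖ := norm_le_add_norm_add a (u x)
    _ ≤ ‖a + u x‖ + ‖0 - v x‖ := by rw [zero_sub, norm_neg]; gcongr; exact h x

theorem norm_le_mul_norm_inr {c : ℝ} (hc : 1 ≤ c) (h : ∀ x, ‖v x‖ ≤ c * ‖u x‖) (b : B) :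
    ‖b‖ ≤ c * ‖inr u v b‖ := by
  have hc₀ : 0 < c := by linarith
  rw [← div_le_iff₀' hc₀]
  refine le_norm_mk fun x => (div_le_iff₀' hc₀).2 ?_
  calc ‖b‖ ≤ ‖v x‖ + ‖b - v x‖ := norm_le_norm_add_norm_sub' b (v x)
    _ ≤ c * ‖0 + u x‖ + c * ‖b - v x‖ := by
        rw [zero_add]
        gcongr
        exacts [h x, le_mul_of_one_le_left (norm_nonneg _) hc]
    _ = c * (‖0 + u x‖ + ‖b - v x‖) := (mul_add _ _ _).symm

variable {Z : Type*} [SeminormedAddCommGroup Z] [NormedSpace 𝕜 Z]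
  (f : A →L[𝕜] Z) (g : B →L[𝕜] Z) (h : ∀ x, f (u x) = g (v x))

def desc : L1Pushout u v →L[𝕜] Z :=
  (rel u v).liftQL (f ∘L WithLp.fstL 1 𝕜 A B + g ∘L WithLp.sndL 1 𝕜 A B)
    (by rintro _ ⟨x, rfl⟩; simp [h])

@[simp] theorem desc_inl (a : A) : desc f g h (inl u v a) = f a := by
  simp [desc, inl, mk]

@[simp] theorem desc_inr (b : B) : desc f g h (inr u v b) = g b := by
  simp [desc, inr, mk]

theorem norm_desc_le : ‖desc f g h‖ ≤ max ‖f‖ ‖g‖ := by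
  refine (Submodule.norm_liftQL_le _ _ _).trans <|
    ContinuousLinearMap.opNorm_le_bound _ (by positivity) fun w => ?_
  calc ‖f w.fst + g w.snd‖ ≤ ‖f‖ * ‖w.fst‖ + ‖g‖ * ‖w.snd‖ :=
        (norm_add_le _ _).trans (add_le_add (f.le_opNorm _) (g.le_opNorm _))
    _ ≤ max ‖f‖ ‖g‖ * ‖w‖ := by
        rw [WithLp.prod_norm_eq_of_L1, mul_add]
        gcongr
        exacts [le_max_left _ _, le_max_right _ _]

end L1Pushout

end L1Pushout

theorem pushout_lemma_general
    (Y : Type*) [NormedAddCommGroup Y] [NormedSpace ℝ Y] [FiniteDimensional ℝ Y]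
    (X : Submodule ℝ Y)
    (A : Type*) [NormedAddCommGroup A] [NormedSpace ℝ A] [FiniteDimensional ℝ A]
    (Z : Type*) [NormedAddCommGroup Z] [NormedSpace ℝ Z]
    (e : X →ₗ[ℝ] A) (he : ∀ x : X, ‖e x‖ = ‖x‖)
    (r : ℝ) (hr : 1 < r)
    (T : Y →L[ℝ] Z) (hT : ‖T‖ ≤ r)
    (π : A →L[ℝ] Z) (hπ : ‖π‖ ≤ 1)
    (hcomm : ∀ x : X, π (e x) = T (x : Y)) :
    ∃ (C : FinDimBanach) (iA : A →ₗ[ℝ] C) (iY : Y →ₗ[ℝ] C) (π' : C →L[ℝ] Z),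
      (∀ a : A, ‖iA a‖ = ‖a‖) ∧
      (∀ y : Y, (1 + (r - 1))⁻¹ * ‖y‖ ≤ ‖iY y‖ ∧ ‖iY y‖ ≤ (1 + (r - 1)) * ‖y‖) ∧
      ‖π'‖ ≤ 1 ∧
      (∀ x : X, iA (e x) = iY (x : Y)) ∧
      (∀ a : A, π' (iA a) = π a) ∧
      (∀ y : Y, π' (iY y) = T y) := by
  have hr₀ : 0 < r := by linarith
  let v : X →ₗ[ℝ] Y := r • X.subtype
  have hv (x : X) : ‖v x‖ = r * ‖e x‖ := by simp [v, he, norm_smul, abs_of_pos hr₀]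
  have hcomm' (x : X) : π (e x) = (r⁻¹ • T) (v x) := by simp [v, hcomm, hr₀.ne']
  have hT' : ‖r⁻¹ • T‖ ≤ 1 := by
    rw [norm_smul, norm_inv, Real.norm_of_nonneg hr₀.le, inv_mul_le_iff₀ hr₀, mul_one]
    exact hT
  have : IsClosed (L1Pushout.rel e v : Set (WithLp 1 (A × Y))) :=
    Submodule.closed_of_finiteDimensional _
  obtain ⟨C, ⟨ψ⟩⟩ := FinDimBanach.exists_linearIsometryEquiv (L1Pushout e v)
  let iY : Y →ₗ[ℝ] C := ψ.toLinearMap ∘ₗ L1Pushout.inr e v ∘ₗ (r • LinearMap.id)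
  have hiY (y : Y) : ‖y‖ ≤ ‖iY y‖ ∧ ‖iY y‖ ≤ r * ‖y‖ := by
    have hlow := L1Pushout.norm_le_mul_norm_inr hr.le (fun x => (hv x).le) (r • y)
    have hup := L1Pushout.norm_inr_le (u := e) (v := v) (r • y)
    rw [norm_smul, Real.norm_of_nonneg hr₀.le] at hlow hup
    rw [show ‖iY y‖ = ‖L1Pushout.inr e v (r • y)‖ from ψ.norm_map _]
    exact ⟨le_of_mul_le_mul_left hlow hr₀, hup⟩
  rw [add_sub_cancel]
  refine ⟨C, ψ.toLinearMap ∘ₗ L1Pushout.inl e v, iY,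
    (L1Pushout.desc π (r⁻¹ • T) hcomm').comp (ψ.symm : C →L[ℝ] L1Pushout e v),
    fun a => ?_, fun y => ⟨?_, (hiY y).2⟩, ?_, fun x => ?_, fun a => ?_, fun y => ?_⟩
  · refine (ψ.norm_map _).trans (L1Pushout.norm_inl (fun x => ?_) a)
    rw [hv]
    exact le_mul_of_one_le_left (norm_nonneg _) hr.le
  · exact (mul_le_of_le_one_left (norm_nonneg y) (inv_le_one_of_one_le₀ hr.le)).trans (hiY y).1
  · rw [ContinuousLinearMap.opNorm_comp_linearIsometryEquiv]
    exact (L1Pushout.norm_desc_le _ _ _).trans (max_le hπ hT')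
  · simp [iY, L1Pushout.inl_apply_eq_inr_apply, v]
  · simp
  · simp [iY, hr₀.ne']

/-- Let `X ⊆ Y` and `A` be finite-dimensional Banach spaces, `Z` a Banach space,
`e : X → A` an isometric embedding, `T : Y → Z` linear with `‖T‖ ≤ r` for some `r > 1`, and
`π : A → Z` nonexpansive with `π ∘ e = T ↾ X`.  Then there exist a finite-dimensional Banach
space `C`, an isometric embedding `i_A : A → C`, an `(r-1)`-isometric embedding `i_Y : Y → C`
and a nonexpansive operator `π' : C → Z` with `i_A ∘ e = i_Y ↾ X`, `π' ∘ i_A = π` and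
`π' ∘ i_Y = T`. -/
theorem pushout_lemma
    (Y : Type*) [NormedAddCommGroup Y] [NormedSpace ℝ Y] [FiniteDimensional ℝ Y]
    (X : Submodule ℝ Y)
    (A : Type*) [NormedAddCommGroup A] [NormedSpace ℝ A] [FiniteDimensional ℝ A]
    (Z : Type*) [NormedAddCommGroup Z] [NormedSpace ℝ Z] [CompleteSpace Z]
    (e : X →ₗ[ℝ] A) (he : ∀ x : X, ‖e x‖ = ‖x‖)
    (r : ℝ) (hr : 1 < r)
    (T : Y →L[ℝ] Z) (hT : ‖T‖ ≤ r)
    (π : A →L[ℝ] Z) (hπ : ‖π‖ ≤ 1)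
    (hcomm : ∀ x : X, π (e x) = T (x : Y)) :
    ∃ (C : FinDimBanach) (iA : A →ₗ[ℝ] C) (iY : Y →ₗ[ℝ] C) (π' : C →L[ℝ] Z),
      (∀ a : A, ‖iA a‖ = ‖a‖) ∧
      (∀ y : Y, (1 + (r - 1))⁻¹ * ‖y‖ ≤ ‖iY y‖ ∧ ‖iY y‖ ≤ (1 + (r - 1)) * ‖y‖) ∧
      ‖π'‖ ≤ 1 ∧
      (∀ x : X, iA (e x) = iY (x : Y)) ∧
      (∀ a : A, π' (iA a) = π a) ∧
      (∀ y : Y, π' (iY y) = T y) :=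
  pushout_lemma_general Y X A Z e he r hr T hT π hπ hcomm
end

section
/- Let (Gₙ)_{n∈ℕ} be a sequence of separable Banach spaces, each of almost universal disposition for finite-dimensional normed spaces, and for each n let πₙ : Gₙ₊₁ → Gₙ be a nonexpansive linear operator satisfying: for every ε > 0, all finite-dimensional normed spaces E ⊆ F, every nonexpansive linear operator T : F → Gₙ and every isometric embedding e : E → Gₙ₊₁ with T ↾ E = πₙ ∘ e, there exists an ε-isometric embedding f : F → Gₙ₊₁ with f ↾ E = e and πₙ ∘ f = T. Let E = {x ∈ ∏ₙ Gₙ : πₙ(xₙ₊₁) = xₙ for all n}, equipped with the (increasing) sequence of seminorms pₙ(x) = ‖xₙ‖. Then E is of almost universal disposition for finite-dimensional graded Fréchet spaces: for every ε > 0, all finite-dimensional graded Fréchet spaces X ⊆ Y and every isometric embedding f₀ : X → E there exists an ε-isometric embedding f : Y → E with f ↾ X = f₀. -/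
/-- The inverse limit `E = {x ∈ ∏ₙ Gₙ : πₙ(xₙ₊₁) = xₙ}` of a sequence of Banach spaces along
linear operators `πₙ : Gₙ₊₁ → Gₙ`, as a submodule of the product. -/
def invLimit (G : ℕ → Type*) [∀ n, NormedAddCommGroup (G n)] [∀ n, NormedSpace ℝ (G n)]
    (π : ∀ n : ℕ, G (n + 1) →L[ℝ] G n) : Submodule ℝ (∀ n, G n) where
  carrier := {x | ∀ n : ℕ, π n (x (n + 1)) = x n}
  zero_mem' := by intro n; simp
  add_mem' := by
    intro a b ha hb n
    simp only [Pi.add_apply, map_add, ha n, hb n]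
  smul_mem' := by
    intro c x hx n
    simp only [Pi.smul_apply, map_smul, hx n]

/-- The `n`-th seminorm `pₙ(x) = ‖xₙ‖` on the inverse limit. -/
noncomputable def invLimitSeminorm (G : ℕ → Type*) [∀ n, NormedAddCommGroup (G n)]
    [∀ n, NormedSpace ℝ (G n)] (π : ∀ n : ℕ, G (n + 1) →L[ℝ] G n) (n : ℕ) :
    Seminorm ℝ (invLimit G π) where
  toFun x := ‖(x : ∀ k, G k) n‖
  map_zero' := by simp
  add_le' := by intro x y; simpa using norm_add_le ((x : ∀ k, G k) n) ((y : ∀ k, G k) n)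
  neg' := by intro x; simp
  smul' := by intro c x; simp [norm_smul]

/-!
The extension is built one coordinate at a time. Suppose `gₙ : Y → Gₙ` extends the `n`-th
coordinate of `f₀` and is a `(1 + δₙ)`-isometry for `qₙ`, with `δₙ < ε`. The seminorm
`N = max q₍ₙ₊₁₎ ‖gₙ ·‖` makes `gₙ` nonexpansive, still agrees with `q₍ₙ₊₁₎` on `X` (as `πₙ` is
nonexpansive), and is at most `(1 + δₙ) q₍ₙ₊₁₎`. Applying (2') on the normed quotient of `(Y, N)`
gives `g₍ₙ₊₁₎` with `πₙ ∘ g₍ₙ₊₁₎ = gₙ` extending the next coordinate of `f₀`, which is a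
`(1 + η)(1 + δₙ)`-isometry for `q₍ₙ₊₁₎`. Choosing `η` small keeps every `δₙ` below `ε`, and the
compatible sequence `(gₙ)` is a map into the inverse limit.
-/

theorem LinearMap.exists_comp_eq_of_ker_le {K M N P : Type*} [DivisionRing K]
    [AddCommGroup M] [Module K M] [AddCommGroup N] [Module K N] [AddCommGroup P] [Module K P]
    {f : M →ₗ[K] N} (hf : Function.Surjective f) {g : M →ₗ[K] P} (h : ker f ≤ ker g) :
    ∃ g' : N →ₗ[K] P, g' ∘ₗ f = g := by
  obtain ⟨σ, hσ⟩ := f.exists_rightInverse_of_surjective (range_eq_top.2 hf)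
  refine ⟨g ∘ₗ σ, ext fun x => ?_⟩
  have hx : σ (f x) - x ∈ ker f := by
    simp [mem_ker, ← comp_apply f σ, hσ]
  simpa [sub_eq_zero] using h hx

theorem LinearMap.exists_comp_eq_of_norm_le {K M N P : Type*} [DivisionRing K]
    [AddCommGroup M] [Module K M] [SeminormedAddCommGroup N] [Module K N]
    [NormedAddCommGroup P] [Module K P] {f : M →ₗ[K] N} (hf : Function.Surjective f)
    {g : M →ₗ[K] P} (h : ∀ x, ‖g x‖ ≤ ‖f x‖) : ∃ g' : N →ₗ[K] P, g' ∘ₗ f = g :=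
  exists_comp_eq_of_ker_le hf fun x hx =>
    norm_le_zero_iff.1 <| by simpa [mem_ker.1 hx] using h x

theorem LinearMap.exists_isometry_of_norm_eq {M F G : Type*} [AddCommGroup M] [Module ℝ M]
    [NormedAddCommGroup F] [NormedSpace ℝ F] [NormedAddCommGroup G] [NormedSpace ℝ G]
    (P : M →ₗ[ℝ] F) {X : Submodule ℝ M} (e : X →ₗ[ℝ] G) (he : ∀ x : X, ‖e x‖ = ‖P x‖) :
    ∃ e' : X.map P →ₗ[ℝ] G, (∀ z, ‖e' z‖ = ‖z‖) ∧ ∀ x : X, e' (P.submoduleMap X x) = e x := by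
  obtain ⟨e', he'⟩ := exists_comp_eq_of_norm_le (P.submoduleMap_surjective X) (g := e)
    fun x => (he x).le
  refine ⟨e', fun z => ?_, fun x => congr($he' x)⟩
  obtain ⟨x, rfl⟩ := P.submoduleMap_surjective X z
  rw [← comp_apply, he']
  exact he x

theorem Seminorm.exists_linearMap_norm_eq {Y : Type} [AddCommGroup Y] [Module ℝ Y]
    [FiniteDimensional ℝ Y] (N : Seminorm ℝ Y) :
    ∃ (F : Type) (_ : NormedAddCommGroup F) (_ : NormedSpace ℝ F) (_ : FiniteDimensional ℝ F)
      (P : Y →ₗ[ℝ] F), Function.Surjective P ∧ ∀ y, ‖P y‖ = N y := by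
  let := N.toAddGroupSeminorm.toSeminormedAddCommGroup
  let : NormedSpace ℝ Y := ⟨fun c y => (map_smul_eq_mul N c y).le⟩
  exact ⟨SeparationQuotient Y, inferInstance, inferInstance, inferInstance,
    (SeparationQuotient.mkCLM ℝ Y).toLinearMap, SeparationQuotient.surjective_mk,
    fun y => SeparationQuotient.norm_mk y⟩

def AlmostIsometric {Y G : Type*} [Norm G] (δ : ℝ) (p : Y → ℝ) (f : Y → G) : Prop :=
  ∀ y, (1 + δ)⁻¹ * p y ≤ ‖f y‖ ∧ ‖f y‖ ≤ (1 + δ) * p y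

theorem AlmostIsometric.mono {Y G : Type*} [Norm G] {δ δ' : ℝ} {p : Y → ℝ} {f : Y → G}
    (h : AlmostIsometric δ p f) (hδ : 0 ≤ δ) (hδδ' : δ ≤ δ') (hp : ∀ y, 0 ≤ p y) :
    AlmostIsometric δ' p f := fun y =>
  ⟨le_trans (by gcongr; exact hp y) (h y).1, (h y).2.trans (by gcongr; exact hp y)⟩

def IsOfAlmostUniversalDisposition (G : Type*) [NormedAddCommGroup G] [NormedSpace ℝ G] :
    Prop :=
  ∀ ε : ℝ, 0 < ε →
    ∀ (F : Type) [NormedAddCommGroup F] [NormedSpace ℝ F] [FiniteDimensional ℝ F]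
      (E : Submodule ℝ F) (e : E →ₗ[ℝ] G), (∀ x : E, ‖e x‖ = ‖x‖) →
      ∃ f : F →ₗ[ℝ] G, (∀ x : E, f (x : F) = e x) ∧ AlmostIsometric ε (‖·‖) f

/-- Property (2') of the operators `πₙ`. -/
def HasAlmostIsometricLifts {G G' : Type*} [NormedAddCommGroup G] [NormedSpace ℝ G]
    [NormedAddCommGroup G'] [NormedSpace ℝ G'] (π : G' →L[ℝ] G) : Prop :=
  ∀ ε : ℝ, 0 < ε →
    ∀ (F : Type) [NormedAddCommGroup F] [NormedSpace ℝ F] [FiniteDimensional ℝ F]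
      (E : Submodule ℝ F) (T : F →L[ℝ] G), ‖T‖ ≤ 1 →
      ∀ e : E →ₗ[ℝ] G', (∀ x : E, ‖e x‖ = ‖x‖) → (∀ x : E, T (x : F) = π (e x)) →
        ∃ f : F →ₗ[ℝ] G', (∀ x : E, f (x : F) = e x) ∧ (∀ y : F, π (f y) = T y) ∧
          AlmostIsometric ε (‖·‖) f

section Seminormed

variable {Y : Type} [AddCommGroup Y] [Module ℝ Y] [FiniteDimensional ℝ Y]
  {G G' : Type*} [NormedAddCommGroup G] [NormedSpace ℝ G] [NormedAddCommGroup G']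
  [NormedSpace ℝ G'] {X : Submodule ℝ Y} {δ : ℝ}

theorem IsOfAlmostUniversalDisposition.exists_extension (hG : IsOfAlmostUniversalDisposition G)
    (N : Seminorm ℝ Y) (e : X →ₗ[ℝ] G) (he : ∀ x, ‖e x‖ = N x) (hδ : 0 < δ) :
    ∃ f : Y →ₗ[ℝ] G, (∀ x : X, f x = e x) ∧ AlmostIsometric δ N f := by
  obtain ⟨F, _, _, _, P, -, hPN⟩ := N.exists_linearMap_norm_eq
  obtain ⟨e', he'_norm, he'⟩ := P.exists_isometry_of_norm_eq e fun x => by rw [he, hPN]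
  obtain ⟨f, hfe, hf⟩ := hG δ hδ F (X.map P) e' he'_norm
  refine ⟨f ∘ₗ P, fun x => ?_, fun y => ?_⟩
  · rw [← he' x, ← hfe]
    rfl
  · simpa only [LinearMap.comp_apply, ← hPN] using hf (P y)

theorem HasAlmostIsometricLifts.exists_lift {π : G' →L[ℝ] G} (hπ : HasAlmostIsometricLifts π)
    (N : Seminorm ℝ Y) (T : Y →ₗ[ℝ] G) (hT : ∀ y, ‖T y‖ ≤ N y) (e : X →ₗ[ℝ] G')
    (he : ∀ x, ‖e x‖ = N x) (hTe : ∀ x : X, T x = π (e x)) (hδ : 0 < δ) :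
    ∃ f : Y →ₗ[ℝ] G', (∀ x : X, f x = e x) ∧ (∀ y, π (f y) = T y) ∧ AlmostIsometric δ N f := by
  obtain ⟨F, _, _, _, P, hP, hPN⟩ := N.exists_linearMap_norm_eq
  obtain ⟨e', he'_norm, he'⟩ := P.exists_isometry_of_norm_eq e fun x => by rw [he, hPN]
  obtain ⟨T', hT'⟩ := LinearMap.exists_comp_eq_of_norm_le hP fun y => (hT y).trans (hPN y).ge
  have hT'_le : ∀ z, ‖T' z‖ ≤ 1 * ‖z‖ := fun z => by
    obtain ⟨y, rfl⟩ := hP z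
    simpa [← LinearMap.comp_apply, hT', hPN] using hT y
  obtain ⟨f, hfe, hπf, hf⟩ := hπ δ hδ F (X.map P) (T'.mkContinuous 1 hT'_le)
    (LinearMap.mkContinuous_norm_le _ zero_le_one _) e' he'_norm fun z => by
      obtain ⟨x, rfl⟩ := P.submoduleMap_surjective X z
      rw [he', ← hTe]
      exact congr($hT' x)
  refine ⟨f ∘ₗ P, fun x => ?_, fun y => ?_, fun y => ?_⟩
  · rw [← he' x, ← hfe]
    rfl
  · rw [LinearMap.comp_apply, hπf, ← hT']
    rfl
  · simpa only [LinearMap.comp_apply, ← hPN] using hf (P y)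

theorem HasAlmostIsometricLifts.exists_lift_of_norm_le_mul {π : G' →L[ℝ] G}
    (hπ : HasAlmostIsometricLifts π) (hπ_le : ‖π‖ ≤ 1) (p : Seminorm ℝ Y) (g : Y →ₗ[ℝ] G)
    (hδ : 0 ≤ δ) (hg : ∀ y, ‖g y‖ ≤ (1 + δ) * p y) (e : X →ₗ[ℝ] G') (he : ∀ x, ‖e x‖ = p x)
    (hge : ∀ x : X, g x = π (e x)) {η : ℝ} (hη : 0 < η) :
    ∃ f : Y →ₗ[ℝ] G', (∀ x : X, f x = e x) ∧ (∀ y, π (f y) = g y) ∧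
      AlmostIsometric ((1 + η) * (1 + δ) - 1) p f := by
  let N := p ⊔ (normSeminorm ℝ G).comp g
  have hN : ∀ y, N y = max (p y) ‖g y‖ := fun y => rfl
  have hgX : ∀ x : X, ‖g x‖ ≤ p x := fun x => by
    rw [hge, ← he]
    exact π.le_of_opNorm_le hπ_le _ |>.trans_eq (one_mul _)
  obtain ⟨f, hfe, hπf, hf⟩ := hπ.exists_lift N g (fun y => (hN y).symm ▸ le_max_right _ _) e
    (fun x => by rw [hN, max_eq_left (hgX x), he]) hge hη
  refine ⟨f, hfe, hπf, fun y => ⟨?_, ?_⟩⟩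
  · calc (1 + ((1 + η) * (1 + δ) - 1))⁻¹ * p y ≤ (1 + η)⁻¹ * p y := by
          gcongr
          nlinarith
      _ ≤ (1 + η)⁻¹ * N y := by gcongr; exact (hN y).symm ▸ le_max_left _ _
      _ ≤ ‖f y‖ := (hf y).1
  · calc ‖f y‖ ≤ (1 + η) * N y := (hf y).2
      _ ≤ (1 + η) * ((1 + δ) * p y) := by
          gcongr
          rw [hN]
          exact max_le (le_mul_of_one_le_left (apply_nonneg p y) (by linarith)) (hg y)
      _ = (1 + ((1 + η) * (1 + δ) - 1)) * p y := by ring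

end Seminormed

theorem exists_seq_of_forall_exists_succ {α : ℕ → Type*} {p : ∀ n, α n → Prop}
    {r : ∀ n, α n → α (n + 1) → Prop} (h₀ : ∃ a, p 0 a)
    (h : ∀ n a, p n a → ∃ b, p (n + 1) b ∧ r n a b) :
    ∃ s : ∀ n, α n, ∀ n, p n (s n) ∧ r n (s n) (s (n + 1)) := by
  choose a₀ ha₀ using h₀
  choose next hnext using h
  let s : ∀ n, {a // p n a} := fun n =>
    Nat.rec ⟨a₀, ha₀⟩ (fun n a => ⟨next n a a.2, (hnext n a a.2).1⟩) n
  exact ⟨fun n => (s n).1, fun n => ⟨(s n).2, (hnext n _ (s n).2).2⟩⟩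

theorem exists_pos_mul_sub_one_lt {δ ε : ℝ} (hδ : 0 ≤ δ) (hδε : δ < ε) :
    ∃ η > 0, (1 + η) * (1 + δ) - 1 < ε :=
  ⟨(ε - δ) / (2 * (1 + δ)), by apply div_pos <;> linarith, by field_simp; linarith⟩

def invLimitLift {G : ℕ → Type*} [∀ n, NormedAddCommGroup (G n)] [∀ n, NormedSpace ℝ (G n)]
    {π : ∀ n : ℕ, G (n + 1) →L[ℝ] G n} {Y : Type*} [AddCommGroup Y] [Module ℝ Y]
    (g : ∀ n, Y →ₗ[ℝ] G n) (hg : ∀ n y, π n (g (n + 1) y) = g n y) :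
    Y →ₗ[ℝ] invLimit G π :=
  (LinearMap.pi g).codRestrict (invLimit G π) fun y n => hg n y

theorem invLimit_almost_universal_disposition_general
    (G : ℕ → Type*) [∀ n, NormedAddCommGroup (G n)] [∀ n, NormedSpace ℝ (G n)]
    -- each `Gₙ` is of almost universal disposition for finite-dimensional normed spaces:
    (hG : ∀ (n : ℕ) (ε : ℝ), 0 < ε →
      ∀ (F : Type) [NormedAddCommGroup F] [NormedSpace ℝ F] [FiniteDimensional ℝ F]
        (E : Submodule ℝ F) (e : E →ₗ[ℝ] G n), (∀ x : E, ‖e x‖ = ‖x‖) →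
        ∃ f : F →ₗ[ℝ] G n, (∀ x : E, f (x : F) = e x) ∧
          ∀ y : F, (1 + ε)⁻¹ * ‖y‖ ≤ ‖f y‖ ∧ ‖f y‖ ≤ (1 + ε) * ‖y‖)
    (π : ∀ n : ℕ, G (n + 1) →L[ℝ] G n) (hπ : ∀ n, ‖π n‖ ≤ 1)
    -- each `πₙ` satisfies the exact extension property (2'):
    (hπ2 : ∀ (n : ℕ) (ε : ℝ), 0 < ε →
      ∀ (F : Type) [NormedAddCommGroup F] [NormedSpace ℝ F] [FiniteDimensional ℝ F]
        (E : Submodule ℝ F) (T : F →L[ℝ] G n), ‖T‖ ≤ 1 →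
        ∀ e : E →ₗ[ℝ] G (n + 1), (∀ x : E, ‖e x‖ = ‖x‖) →
          (∀ x : E, T (x : F) = π n (e x)) →
          ∃ f : F →ₗ[ℝ] G (n + 1), (∀ x : E, f (x : F) = e x) ∧
            (∀ y : F, π n (f y) = T y) ∧
            ∀ y : F, (1 + ε)⁻¹ * ‖y‖ ≤ ‖f y‖ ∧ ‖f y‖ ≤ (1 + ε) * ‖y‖) :
    -- conclusion: the inverse limit is of almost universal disposition for
    -- finite-dimensional graded Fréchet spaces
    ∀ ε : ℝ, 0 < ε →
      ∀ (Y : Type) [AddCommGroup Y] [Module ℝ Y] [FiniteDimensional ℝ Y]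
        (q : ℕ → Seminorm ℝ Y), Monotone q → (∀ y : Y, (∀ i : ℕ, q i y = 0) → y = 0) →
        ∀ (X : Submodule ℝ Y) (f₀ : X →ₗ[ℝ] invLimit G π),
          (∀ (i : ℕ) (x : X), invLimitSeminorm G π i (f₀ x) = q i (x : Y)) →
          ∃ f : Y →ₗ[ℝ] invLimit G π, (∀ x : X, f (x : Y) = f₀ x) ∧
            ∀ (i : ℕ) (y : Y),
              (1 + ε)⁻¹ * q i y ≤ invLimitSeminorm G π i (f y) ∧
              invLimitSeminorm G π i (f y) ≤ (1 + ε) * q i y := by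
  intro ε hε Y _ _ _ q hq _ X f₀ hf₀
  have hG₀ : IsOfAlmostUniversalDisposition (G 0) := hG 0
  have hπ_lifts : ∀ n, HasAlmostIsometricLifts (π n) := hπ2
  let e n : X →ₗ[ℝ] G n := LinearMap.proj n ∘ₗ (invLimit G π).subtype ∘ₗ f₀
  refine (exists_seq_of_forall_exists_succ
    (p := fun n (g : Y →ₗ[ℝ] G n) =>
      (∀ x : X, g x = e n x) ∧ ∃ δ ∈ Set.Ico 0 ε, AlmostIsometric δ (q n) g)
    (r := fun n g g' => ∀ y, π n (g' y) = g y) ?base ?step).elim fun g hg => ?_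
  case base =>
    obtain ⟨g, hge, hg⟩ := hG₀.exists_extension (q 0) (e 0) (hf₀ 0) (half_pos hε)
    exact ⟨g, hge, ε / 2, ⟨by positivity, half_lt_self hε⟩, hg⟩
  case step =>
    rintro n g ⟨hge, δ, ⟨hδ, hδε⟩, hg⟩
    obtain ⟨η, hη, hηε⟩ := exists_pos_mul_sub_one_lt hδ hδε
    obtain ⟨g', hg'e, hπg', hg'⟩ :=
      (hπ_lifts n).exists_lift_of_norm_le_mul (hπ n) (q (n + 1)) g hδ
        (fun y => (hg y).2.trans (by gcongr; exact hq n.le_succ y)) (e (n + 1)) (hf₀ (n + 1))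
        (fun x => (hge x).trans ((f₀ x).2 n).symm) hη
    exact ⟨g', ⟨hg'e, _, ⟨by nlinarith, hηε⟩, hg'⟩, hπg'⟩
  refine ⟨invLimitLift g fun n => (hg n).2,
    fun x => Subtype.ext <| funext fun n => (hg n).1.1 x, fun i y => ?_⟩
  obtain ⟨δ, hδ, hgi⟩ := (hg i).1.2
  exact hgi.mono hδ.1 hδ.2.le (apply_nonneg (q i)) y

/-- Let `(Gₙ)` be separable Banach spaces of almost universal disposition for finite-dimensional
normed spaces and `πₙ : Gₙ₊₁ → Gₙ` nonexpansive operators with the exact extension property (2').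
Then the inverse limit `E = {x : πₙ(xₙ₊₁) = xₙ}` with the seminorms `pₙ(x) = ‖xₙ‖` is of almost
universal disposition for finite-dimensional graded Fréchet spaces. -/
theorem invLimit_almost_universal_disposition
    (G : ℕ → Type*) [∀ n, NormedAddCommGroup (G n)] [∀ n, NormedSpace ℝ (G n)]
    [∀ n, CompleteSpace (G n)] [∀ n, TopologicalSpace.SeparableSpace (G n)]
    -- each `Gₙ` is of almost universal disposition for finite-dimensional normed spaces:
    (hG : ∀ (n : ℕ) (ε : ℝ), 0 < ε →
      ∀ (F : Type) [NormedAddCommGroup F] [NormedSpace ℝ F] [FiniteDimensional ℝ F]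
        (E : Submodule ℝ F) (e : E →ₗ[ℝ] G n), (∀ x : E, ‖e x‖ = ‖x‖) →
        ∃ f : F →ₗ[ℝ] G n, (∀ x : E, f (x : F) = e x) ∧
          ∀ y : F, (1 + ε)⁻¹ * ‖y‖ ≤ ‖f y‖ ∧ ‖f y‖ ≤ (1 + ε) * ‖y‖)
    (π : ∀ n : ℕ, G (n + 1) →L[ℝ] G n) (hπ : ∀ n, ‖π n‖ ≤ 1)
    -- each `πₙ` satisfies the exact extension property (2'):
    (hπ2 : ∀ (n : ℕ) (ε : ℝ), 0 < ε →
      ∀ (F : Type) [NormedAddCommGroup F] [NormedSpace ℝ F] [FiniteDimensional ℝ F]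
        (E : Submodule ℝ F) (T : F →L[ℝ] G n), ‖T‖ ≤ 1 →
        ∀ e : E →ₗ[ℝ] G (n + 1), (∀ x : E, ‖e x‖ = ‖x‖) →
          (∀ x : E, T (x : F) = π n (e x)) →
          ∃ f : F →ₗ[ℝ] G (n + 1), (∀ x : E, f (x : F) = e x) ∧
            (∀ y : F, π n (f y) = T y) ∧
            ∀ y : F, (1 + ε)⁻¹ * ‖y‖ ≤ ‖f y‖ ∧ ‖f y‖ ≤ (1 + ε) * ‖y‖) :
    -- conclusion: the inverse limit is of almost universal disposition for
    -- finite-dimensional graded Fréchet spaces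
    ∀ ε : ℝ, 0 < ε →
      ∀ (Y : Type) [AddCommGroup Y] [Module ℝ Y] [FiniteDimensional ℝ Y]
        (q : ℕ → Seminorm ℝ Y), Monotone q → (∀ y : Y, (∀ i : ℕ, q i y = 0) → y = 0) →
        ∀ (X : Submodule ℝ Y) (f₀ : X →ₗ[ℝ] invLimit G π),
          (∀ (i : ℕ) (x : X), invLimitSeminorm G π i (f₀ x) = q i (x : Y)) →
          ∃ f : Y →ₗ[ℝ] invLimit G π, (∀ x : X, f (x : Y) = f₀ x) ∧
            ∀ (i : ℕ) (y : Y),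
              (1 + ε)⁻¹ * q i y ≤ invLimitSeminorm G π i (f y) ∧
              invLimitSeminorm G π i (f y) ≤ (1 + ε) * q i y :=
  invLimit_almost_universal_disposition_general G hG π hπ hπ2
end

section
/- Let X and Y be finite-dimensional graded Fréchet spaces with fixed increasing sequences of seminorms (‖·‖_{X,i})_{i∈ℕ} and (‖·‖_{Y,i})_{i∈ℕ}, let ε > 0, and let f : X → Y be an ε-isometric embedding. Then there exist a finite-dimensional graded Fréchet space Z with seminorms (‖·‖_{Z,i})_{i∈ℕ} and isometric embeddings ι : X → Z and j : Y → Z such that ‖j(f(x)) − ι(x)‖_{Z,i} ≤ ε‖x‖_{X,i} for all i ∈ ℕ and all x ∈ X. -/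
/-- A bundled finite-dimensional graded Fréchet space: a finite-dimensional real vector space
with a fixed increasing separating sequence of seminorms (completeness is automatic in finite
dimension). -/
structure FinGradedFrechet where
  carrier : Type
  [acg : AddCommGroup carrier]
  [mod : Module ℝ carrier]
  [fd : FiniteDimensional ℝ carrier]
  seminorms : ℕ → Seminorm ℝ carrier
  mono : Monotone seminorms
  separating : ∀ x : carrier, (∀ i : ℕ, seminorms i x = 0) → x = 0

attribute [instance] FinGradedFrechet.acg FinGradedFrechet.mod FinGradedFrechet.fd

instance : CoeSort FinGradedFrechet Type := ⟨FinGradedFrechet.carrier⟩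

/-!
Glue `X` and `Y` along `f` inside `X × Y`. At each level take the largest seminorm lying below
both the sum seminorm `pX x + pY y` and `ε pX x + pY (y + f x)`; the latter charges only
`ε pX x` to `(-x, f x) = j (f x) - ι x`, and the largest seminorm below two seminorms is their
infimal convolution `⊓`. The lower bound on `f` keeps `ι = (·, 0)` isometric; the upper bound
keeps `j = (0, ·)` isometric and makes the glued seminorm dominate `ε / (2 + ε)` times the sum
seminorm, which gives separation.
-/

open scoped NNReal

namespace Seminorm

variable {𝕜 E F : Type*} [NormedField 𝕜] [AddCommGroup E] [Module 𝕜 E]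
  [AddCommGroup F] [Module 𝕜 F]

theorem le_inf_apply {p q : Seminorm 𝕜 E} {x : E} {c : ℝ} (h : ∀ u, c ≤ p u + q (x - u)) :
    c ≤ (p ⊓ q) x :=
  le_ciInf h

def prodSum (p : Seminorm 𝕜 E) (q : Seminorm 𝕜 F) : Seminorm 𝕜 (E × F) :=
  p.comp (LinearMap.fst 𝕜 E F) + q.comp (LinearMap.snd 𝕜 E F)

@[simp]
theorem prodSum_apply (p : Seminorm 𝕜 E) (q : Seminorm 𝕜 F) (z : E × F) :
    p.prodSum q z = p z.1 + q z.2 :=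
  rfl

end Seminorm

section Glue

variable {𝕜 X Y : Type*} [NormedField 𝕜] [AddCommGroup X] [Module 𝕜 X]
  [AddCommGroup Y] [Module 𝕜 Y]

def defectSeminorm (p : Seminorm 𝕜 X) (q : Seminorm 𝕜 Y) (f : X →ₗ[𝕜] Y) (ε : ℝ≥0) :
    Seminorm 𝕜 (X × Y) :=
  ε • p.comp (LinearMap.fst 𝕜 X Y) + q.comp (LinearMap.snd 𝕜 X Y + f ∘ₗ LinearMap.fst 𝕜 X Y)

@[simp]
theorem defectSeminorm_apply (p : Seminorm 𝕜 X) (q : Seminorm 𝕜 Y) (f : X →ₗ[𝕜] Y) (ε : ℝ≥0)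
    (z : X × Y) : defectSeminorm p q f ε z = ε * p z.1 + q (z.2 + f z.1) :=
  rfl

noncomputable def glueSeminorm (p : Seminorm 𝕜 X) (q : Seminorm 𝕜 Y) (f : X →ₗ[𝕜] Y)
    (ε : ℝ≥0) : Seminorm 𝕜 (X × Y) :=
  defectSeminorm p q f ε ⊓ p.prodSum q

variable {p : Seminorm 𝕜 X} {q : Seminorm 𝕜 Y} {f : X →ₗ[𝕜] Y} {ε : ℝ≥0}

theorem glueSeminorm_le_defectSeminorm : glueSeminorm p q f ε ≤ defectSeminorm p q f ε :=
  inf_le_left (a := defectSeminorm p q f ε) (b := p.prodSum q)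

theorem glueSeminorm_le_prodSum : glueSeminorm p q f ε ≤ p.prodSum q :=
  inf_le_right (a := defectSeminorm p q f ε) (b := p.prodSum q)

theorem glueSeminorm_apply_inl (hf : ∀ x, (1 + (ε : ℝ))⁻¹ * p x ≤ q (f x)) (x : X) :
    glueSeminorm p q f ε (x, 0) = p x := by
  refine le_antisymm (le_of_le_of_eq (glueSeminorm_le_prodSum _) (by simp))
    (Seminorm.le_inf_apply fun ⟨a, b⟩ => ?_)
  have hpa : p a ≤ q (f a) + ε * p a :=
    calc p a = (1 + (ε : ℝ))⁻¹ * p a + ε * ((1 + (ε : ℝ))⁻¹ * p a) := by field_simp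
      _ ≤ q (f a) + ε * p a := by
        gcongr
        · exact hf a
        · exact mul_le_of_le_one_left (apply_nonneg p a) (inv_le_one_of_one_le₀ (by simp))
  have hqfa : q (f a) ≤ q (b + f a) + q b := by
    simpa using map_add_le_add q (b + f a) (-b)
  have hpx := le_map_add_map_sub p x a
  simp only [defectSeminorm_apply, Seminorm.prodSum_apply, Prod.fst_sub, Prod.snd_sub, zero_sub,
    map_neg_eq_map]
  linarith

theorem glueSeminorm_apply_inr (hf : ∀ x, q (f x) ≤ (1 + ε) * p x) (y : Y) :
    glueSeminorm p q f ε (0, y) = q y := by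
  refine le_antisymm (le_of_le_of_eq (glueSeminorm_le_prodSum _) (by simp))
    (Seminorm.le_inf_apply fun ⟨a, b⟩ => ?_)
  have hqb : q b ≤ q (b + f a) + q (f a) := by
    simpa using map_add_le_add q (b + f a) (-f a)
  have hqy := le_map_add_map_sub q y b
  simp only [defectSeminorm_apply, Seminorm.prodSum_apply, Prod.fst_sub, Prod.snd_sub, zero_sub,
    map_neg_eq_map]
  linarith [hf a]

theorem glueSeminorm_neg_map_le (x : X) : glueSeminorm p q f ε (-x, f x) ≤ ε * p x :=
  le_of_le_of_eq (glueSeminorm_le_defectSeminorm _) (by simp)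

theorem smul_prodSum_le_glueSeminorm (hf : ∀ x, q (f x) ≤ (1 + ε) * p x) :
    (ε / (2 + ε)) • p.prodSum q ≤ glueSeminorm p q f ε := by
  have hδ : ε / (2 + ε) ≤ 1 := by
    rw [div_le_one (by positivity)]
    exact le_add_of_nonneg_left zero_le_two
  rw [glueSeminorm]
  refine le_inf (α := Seminorm 𝕜 (X × Y)) (Seminorm.le_def.2 fun ⟨a, b⟩ => ?_) ?_
  swap
  · exact (IsOrderedSMul.smul_le_smul hδ le_rfl).trans_eq (one_smul _ _)
  have hqb : q b ≤ q (b + f a) + (1 + ε) * p a := by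
    have := map_add_le_add q (b + f a) (-f a)
    simp only [add_neg_cancel_right, map_neg_eq_map] at this
    linarith [hf a]
  have hδ' : (ε / (2 + ε) : ℝ) ≤ 1 := by exact_mod_cast hδ
  have hδε : (ε / (2 + ε) : ℝ) * (2 + ε) = ε := div_mul_cancel₀ _ (by positivity)
  simp only [smul_apply, NNReal.smul_def, smul_eq_mul, defectSeminorm_apply,
    Seminorm.prodSum_apply, NNReal.coe_div, NNReal.coe_add, NNReal.coe_ofNat]
  calc (ε / (2 + ε) : ℝ) * (p a + q b)
      ≤ ε / (2 + ε) * (p a + (q (b + f a) + (1 + ε) * p a)) := by gcongr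
    _ = ε / (2 + ε) * q (b + f a) + ε * p a := by linear_combination p a * hδε
    _ ≤ ε * p a + q (b + f a) := by
      linarith [mul_le_of_le_one_left (apply_nonneg q (b + f a)) hδ']

theorem glueSeminorm_mono {p' : Seminorm 𝕜 X} {q' : Seminorm 𝕜 Y} (hp : p ≤ p') (hq : q ≤ q') :
    glueSeminorm p q f ε ≤ glueSeminorm p' q' f ε := by
  unfold glueSeminorm defectSeminorm Seminorm.prodSum
  refine inf_le_inf (α := Seminorm 𝕜 (X × Y)) ?_ ?_ <;> gcongr <;> exact Seminorm.comp_mono _ ‹_›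

theorem glueSeminorm_separating {ι : Type*} {p : ι → Seminorm 𝕜 X} {q : ι → Seminorm 𝕜 Y}
    (hε : 0 < ε) (hf : ∀ i x, q i (f x) ≤ (1 + ε) * p i x)
    (hp : ∀ x, (∀ i, p i x = 0) → x = 0) (hq : ∀ y, (∀ i, q i y = 0) → y = 0)
    (z : X × Y) (hz : ∀ i, glueSeminorm (p i) (q i) f ε z = 0) : z = 0 := by
  have hsum (i : ι) : p i z.1 + q i z.2 = 0 := by
    have h := smul_prodSum_le_glueSeminorm (hf i) z
    rw [hz i, smul_apply, NNReal.smul_def, smul_eq_mul, Seminorm.prodSum_apply] at h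
    have hδ : (0 : ℝ) < (ε / (2 + ε) : ℝ≥0) := by positivity
    exact le_antisymm (nonpos_of_mul_nonpos_right h hδ) (by positivity)
  have hzero (i : ι) := (add_eq_zero_iff_of_nonneg (apply_nonneg _ _) (apply_nonneg _ _)).1 (hsum i)
  exact Prod.ext (hp _ fun i => (hzero i).1) (hq _ fun i => (hzero i).2)

end Glue

namespace FinGradedFrechet

variable {V : Type*} [AddCommGroup V] [Module ℝ V] [FiniteDimensional ℝ V]

/-- Carriers of `FinGradedFrechet` live in `Type`, so a space from any universe is modelled on its
coordinates in a basis. -/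
noncomputable def ofFiniteDimensional (p : ℕ → Seminorm ℝ V) (hmono : Monotone p)
    (hsep : ∀ v, (∀ i, p i v = 0) → v = 0) : FinGradedFrechet where
  carrier := Fin (Module.finrank ℝ V) → ℝ
  seminorms i := (p i).comp (Module.finBasis ℝ V).equivFun.symm.toLinearMap
  mono _ _ h := Seminorm.comp_mono _ (hmono h)
  separating _ hv := (Module.finBasis ℝ V).equivFun.symm.map_eq_zero_iff.1 (hsep _ hv)

noncomputable def equivOfFiniteDimensional (p : ℕ → Seminorm ℝ V) (hmono : Monotone p)
    (hsep : ∀ v, (∀ i, p i v = 0) → v = 0) : V ≃ₗ[ℝ] ofFiniteDimensional p hmono hsep :=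
  (Module.finBasis ℝ V).equivFun

@[simp]
theorem seminorms_equivOfFiniteDimensional (p : ℕ → Seminorm ℝ V) (hmono : Monotone p)
    (hsep : ∀ v, (∀ i, p i v = 0) → v = 0) (i : ℕ) (v : V) :
    (ofFiniteDimensional p hmono hsep).seminorms i (equivOfFiniteDimensional p hmono hsep v) =
      p i v :=
  congrArg (p i) ((Module.finBasis ℝ V).equivFun.symm_apply_apply v)

end FinGradedFrechet

/-- Let `X` and `Y` be finite-dimensional graded Fréchet spaces, `ε > 0`, and `f : X → Y` an
`ε`-isometric embedding.  Then there exist a finite-dimensional graded Fréchet space `Z` and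
isometric embeddings `ι : X → Z` and `j : Y → Z` with
`‖j (f x) - ι x‖_{Z,i} ≤ ε ‖x‖_{X,i}` for all `i` and `x`. -/
theorem eps_isometry_correction
    (X : Type*) [AddCommGroup X] [Module ℝ X] [FiniteDimensional ℝ X]
    (pX : ℕ → Seminorm ℝ X) (hXmono : Monotone pX)
    (hXsep : ∀ x : X, (∀ i : ℕ, pX i x = 0) → x = 0)
    (Y : Type*) [AddCommGroup Y] [Module ℝ Y] [FiniteDimensional ℝ Y]
    (pY : ℕ → Seminorm ℝ Y) (hYmono : Monotone pY)
    (hYsep : ∀ y : Y, (∀ i : ℕ, pY i y = 0) → y = 0)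
    (ε : ℝ) (hε : 0 < ε)
    (f : X →ₗ[ℝ] Y)
    (hf : ∀ (i : ℕ) (x : X),
      (1 + ε)⁻¹ * pX i x ≤ pY i (f x) ∧ pY i (f x) ≤ (1 + ε) * pX i x) :
    ∃ (Z : FinGradedFrechet) (ι : X →ₗ[ℝ] Z) (j : Y →ₗ[ℝ] Z),
      (∀ (i : ℕ) (x : X), Z.seminorms i (ι x) = pX i x) ∧
      (∀ (i : ℕ) (y : Y), Z.seminorms i (j y) = pY i y) ∧
      (∀ (i : ℕ) (x : X), Z.seminorms i (j (f x) - ι x) ≤ ε * pX i x) := by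
  lift ε to ℝ≥0 using hε.le
  let g i := glueSeminorm (pX i) (pY i) f ε
  have hmono : Monotone g := fun _ _ hik => glueSeminorm_mono (hXmono hik) (hYmono hik)
  have hsep := glueSeminorm_separating (by exact_mod_cast hε) (fun i x => (hf i x).2) hXsep hYsep
  let E := FinGradedFrechet.equivOfFiniteDimensional g hmono hsep
  refine ⟨_, E.toLinearMap ∘ₗ LinearMap.inl ℝ X Y, E.toLinearMap ∘ₗ LinearMap.inr ℝ X Y,
    fun i x => ?_, fun i y => ?_, fun i x => ?_⟩
  · simpa [E] using glueSeminorm_apply_inl (fun x => (hf i x).1) x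
  · simpa [E] using glueSeminorm_apply_inr (fun x => (hf i x).2) y
  · have hdefect : E (0, f x) - E (x, 0) = E (-x, f x) := by
      rw [← map_sub, Prod.mk_sub_mk, zero_sub, sub_zero]
    simpa [E, hdefect] using glueSeminorm_neg_map_le x
end

section
/- Let (Gₙ)_{n∈ℕ} be a sequence of Banach spaces and for each n let πₙ : Gₙ₊₁ → Gₙ be a nonexpansive linear operator with the lifting property: for every separable Banach space B and every nonexpansive linear operator T : B → Gₙ there exists an isometric embedding i : B → Gₙ₊₁ with T = πₙ ∘ i. Assume furthermore that every separable Banach space embeds isometrically into G₁. Then for every separable Fréchet space X with an increasing separating sequence of seminorms (‖·‖ₙ)_{n∈ℕ} there exists a linear map f : X → ∏ₙ Gₙ such that ‖(f(x))ₙ‖ = ‖x‖ₙ and πₙ((f(x))ₙ₊₁) = (f(x))ₙ for all n ∈ ℕ and x ∈ X; in particular f is an injective linear map preserving all seminorms. -/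
/-!
Each seminorm `pₙ` yields a local Banach space `Xₙ`, the completion of `(X, pₙ)`, together with a
canonical map `X → Xₙ` preserving `pₙ`. Since `pₙ` is continuous, `Xₙ` is separable, and
`pₙ ≤ pₙ₊₁` gives nonexpansive connecting maps `Xₙ₊₁ → Xₙ` compatible with the canonical maps.
Embed `X₀` isometrically into `G₀`; given an isometry `jₙ : Xₙ → Gₙ`, the lifting property of `πₙ`
applied to the nonexpansive map `Xₙ₊₁ → Xₙ → Gₙ` yields an isometry `jₙ₊₁ : Xₙ₊₁ → Gₙ₊₁` with
`πₙ ∘ jₙ₊₁ = jₙ ∘ (Xₙ₊₁ → Xₙ)`. The map `x ↦ (jₙ xₙ)ₙ` is the required embedding.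
-/

open UniformSpace TopologicalSpace

noncomputable section

universe u v

namespace Shrink

variable {E : Type u} [SeminormedAddCommGroup E] [Small.{v} E]

def isometryEquiv : Shrink.{v} E ≃ᵢ E := ⟨(equivShrink E).symm, fun _ _ => rfl⟩

instance [CompleteSpace E] : CompleteSpace (Shrink.{v} E) :=
  isometryEquiv.completeSpace

instance [SeparableSpace E] : SeparableSpace (Shrink.{v} E) :=
  isometryEquiv.symm.surjective.denseRange.separableSpace isometryEquiv.symm.continuous

def linearIsometryEquiv (𝕜 : Type*) (E : Type u) [NormedField 𝕜] [SeminormedAddCommGroup E]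
    [NormedSpace 𝕜 E] [Small.{v} E] : Shrink.{v} E ≃ₗᵢ[𝕜] E :=
  ⟨Shrink.linearEquiv 𝕜 E, fun _ => rfl⟩

end Shrink

theorem small_of_separableSpace (E : Type u) [MetricSpace E] [SeparableSpace E] : Small.{v} E := by
  rcases isEmpty_or_nonempty E with _ | _
  · infer_instance
  · exact small_of_injective (kuratowskiEmbedding.isometry E).injective

section

variable {𝕜 X : Type*} [NormedField 𝕜] [AddCommGroup X] [Module 𝕜 X]

@[nolint unusedArguments]
def SeminormedOf (_q : Seminorm 𝕜 X) : Type _ := X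

namespace SeminormedOf

variable (q : Seminorm 𝕜 X)

instance : SeminormedAddCommGroup (SeminormedOf q) := q.toSeminormedAddCommGroup

instance : Module 𝕜 (SeminormedOf q) := ‹Module 𝕜 X›

instance : NormedSpace 𝕜 (SeminormedOf q) := ⟨fun c x => (map_smul_eq_mul q c x).le⟩

def of : X ≃ₗ[𝕜] SeminormedOf q := LinearEquiv.refl 𝕜 X

@[simp] theorem norm_of (x : X) : ‖of q x‖ = q x := rfl

theorem continuous_of [TopologicalSpace X] [IsTopologicalAddGroup X] (hq : Continuous q) :
    Continuous (of q) :=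
  continuous_iff_continuous_dist.mpr <| by
    simp only [dist_eq_norm, ← map_sub, norm_of]
    exact hq.comp continuous_sub

end SeminormedOf

abbrev LocalBanachSpace (q : Seminorm 𝕜 X) : Type _ := Completion (SeminormedOf q)

namespace LocalBanachSpace

variable (q : Seminorm 𝕜 X) {q' : Seminorm 𝕜 X}

def incl : X →ₗ[𝕜] LocalBanachSpace q :=
  Completion.toComplₗᵢ.toLinearMap ∘ₗ (SeminormedOf.of q).toLinearMap

@[simp] theorem norm_incl (x : X) : ‖incl q x‖ = q x := by
  simp [incl, Completion.norm_coe]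

theorem separableSpace [TopologicalSpace X] [IsTopologicalAddGroup X] [SeparableSpace X]
    (hq : Continuous q) : SeparableSpace (LocalBanachSpace q) :=
  have := (SeminormedOf.of q).surjective.denseRange.separableSpace (SeminormedOf.continuous_of q hq)
  inferInstance

variable {q}

def map (h : q' ≤ q) : LocalBanachSpace q →L[𝕜] LocalBanachSpace q' :=
  ContinuousLinearMap.completion <|
    ((SeminormedOf.of q').toLinearMap ∘ₗ (SeminormedOf.of q).symm.toLinearMap).mkContinuous 1
      fun x => by rw [one_mul]; exact h _

@[simp] theorem map_incl (h : q' ≤ q) (x : X) : map h (incl q x) = incl q' x := by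
  simp [map, incl]

theorem norm_map_le (h : q' ≤ q) (c : LocalBanachSpace q) : ‖map h c‖ ≤ ‖c‖ := by
  induction c using Completion.induction_on with
  | hp => exact isClosed_le (by fun_prop) (by fun_prop)
  | ih x =>
    simp only [map, ContinuousLinearMap.completion_apply_coe, Completion.norm_coe]
    exact h x

end LocalBanachSpace

end

section InverseSystem

variable {𝕜 : Type*} [NontriviallyNormedField 𝕜]
  {B G : ℕ → Type*} [∀ n, SeminormedAddCommGroup (B n)] [∀ n, NormedSpace 𝕜 (B n)]
  [∀ n, SeminormedAddCommGroup (G n)] [∀ n, NormedSpace 𝕜 (G n)]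

theorem exists_compatible_linearIsometries (π : ∀ n, G (n + 1) →L[𝕜] G n)
    (t : ∀ n, B (n + 1) →L[𝕜] B n) (ht : ∀ n b, ‖t n b‖ ≤ ‖b‖)
    (hlift : ∀ n (T : B (n + 1) →L[𝕜] G n), ‖T‖ ≤ 1 →
      ∃ i : B (n + 1) →ₗᵢ[𝕜] G (n + 1), ∀ b, T b = π n (i b))
    (j₀ : B 0 →ₗᵢ[𝕜] G 0) :
    ∃ j : ∀ n, B n →ₗᵢ[𝕜] G n, ∀ n b, j n (t n b) = π n (j (n + 1) b) := by
  have step (n : ℕ) (j : B n →ₗᵢ[𝕜] G n) :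
      ∃ j' : B (n + 1) →ₗᵢ[𝕜] G (n + 1), ∀ b, j (t n b) = π n (j' b) :=
    hlift n (j.toContinuousLinearMap.comp (t n)) <|
      ContinuousLinearMap.opNorm_le_bound _ zero_le_one fun b => by simpa using ht n b
  choose next hnext using step
  exact ⟨fun n => Nat.rec j₀ next n, fun n => hnext n _⟩

end InverseSystem

section SmallTransfer

variable {F : Type*} [NormedAddCommGroup F] [NormedSpace ℝ F]
  (E : Type*) [NormedAddCommGroup E] [NormedSpace ℝ E] [CompleteSpace E] [SeparableSpace E]

theorem exists_linearIsometry_of_forall_small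
    (h : ∀ (B : Type) [NormedAddCommGroup B] [NormedSpace ℝ B] [CompleteSpace B]
      [SeparableSpace B], ∃ j : B →ₗ[ℝ] F, ∀ b, ‖j b‖ = ‖b‖) :
    Nonempty (E →ₗᵢ[ℝ] F) := by
  have := small_of_separableSpace.{_, 0} E
  obtain ⟨j, hj⟩ := h (Shrink.{0} E)
  exact ⟨.comp ⟨j, hj⟩ (Shrink.linearIsometryEquiv ℝ E).symm.toLinearIsometry⟩

theorem exists_linearIsometry_lift_of_forall_small {G : Type*} [NormedAddCommGroup G]
    [NormedSpace ℝ G] (π : F →L[ℝ] G)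
    (h : ∀ (B : Type) [NormedAddCommGroup B] [NormedSpace ℝ B] [CompleteSpace B]
      [SeparableSpace B] (T : B →L[ℝ] G), ‖T‖ ≤ 1 →
      ∃ i : B →ₗ[ℝ] F, (∀ b, ‖i b‖ = ‖b‖) ∧ ∀ b, T b = π (i b))
    (T : E →L[ℝ] G) (hT : ‖T‖ ≤ 1) :
    ∃ i : E →ₗᵢ[ℝ] F, ∀ b, T b = π (i b) := by
  have := small_of_separableSpace.{_, 0} E
  let e := (Shrink.linearIsometryEquiv ℝ E).toLinearIsometry
  obtain ⟨i, hi, hTi⟩ := h (Shrink.{0} E) (T.comp e.toContinuousLinearMap) <|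
    (T.opNorm_comp_le _).trans (mul_le_one₀ hT (norm_nonneg _) e.norm_toContinuousLinearMap_le)
  refine ⟨.comp ⟨i, hi⟩ (Shrink.linearIsometryEquiv ℝ E).symm.toLinearIsometry, fun b => ?_⟩
  simpa [e] using hTi ((Shrink.linearIsometryEquiv ℝ E).symm b)

end SmallTransfer

theorem embedding_into_inverse_limit_general
    (G : ℕ → Type*) [∀ n, NormedAddCommGroup (G n)] [∀ n, NormedSpace ℝ (G n)]
    (π : ∀ n : ℕ, G (n + 1) →L[ℝ] G n)
    -- lifting property of each `πₙ`:
    (hlift : ∀ (n : ℕ) (B : Type) [NormedAddCommGroup B] [NormedSpace ℝ B] [CompleteSpace B]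
      [TopologicalSpace.SeparableSpace B] (T : B →L[ℝ] G n), ‖T‖ ≤ 1 →
      ∃ i : B →ₗ[ℝ] G (n + 1), (∀ b : B, ‖i b‖ = ‖b‖) ∧ ∀ b : B, T b = π n (i b))
    -- every separable Banach space embeds isometrically into `G₀`:
    (huniv : ∀ (B : Type) [NormedAddCommGroup B] [NormedSpace ℝ B] [CompleteSpace B]
      [TopologicalSpace.SeparableSpace B],
      ∃ j : B →ₗ[ℝ] G 0, ∀ b : B, ‖j b‖ = ‖b‖)
    -- `X` a separable Fréchet space with an increasing separating sequence of seminorms: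
    (X : Type*) [AddCommGroup X] [Module ℝ X] [UniformSpace X]
    [TopologicalSpace.SeparableSpace X]
    (p : ℕ → Seminorm ℝ X) (hpmono : Monotone p)
    (hpsep : ∀ x : X, (∀ n : ℕ, p n x = 0) → x = 0)
    (hpws : WithSeminorms (𝕜 := ℝ) (E := X) p) :
    ∃ f : X →ₗ[ℝ] (∀ n, G n),
      (∀ (n : ℕ) (x : X), ‖f x n‖ = p n x) ∧
      (∀ (n : ℕ) (x : X), π n (f x (n + 1)) = f x n) ∧
      Function.Injective f := by
  have := hpws.topologicalAddGroup
  have (n : ℕ) : SeparableSpace (LocalBanachSpace (p n)) :=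
    LocalBanachSpace.separableSpace _ (hpws.continuous_seminorm n)
  obtain ⟨j₀⟩ := exists_linearIsometry_of_forall_small (LocalBanachSpace (p 0)) huniv
  obtain ⟨j, hj⟩ := exists_compatible_linearIsometries (B := fun n => LocalBanachSpace (p n)) π
    (fun n => LocalBanachSpace.map (hpmono n.le_succ))
    (fun n => LocalBanachSpace.norm_map_le _)
    (fun n => exists_linearIsometry_lift_of_forall_small _ (π n) (hlift n)) j₀
  let f : X →ₗ[ℝ] ∀ n, G n :=
    LinearMap.pi fun n => (j n).toLinearMap ∘ₗ LocalBanachSpace.incl (p n)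
  have hf (n : ℕ) (x : X) : ‖f x n‖ = p n x := by simp [f]
  refine ⟨f, hf, fun n x => by simp [f, ← hj], ?_⟩
  refine (injective_iff_map_eq_zero f).mpr fun x hx => hpsep x fun n => ?_
  rw [← hf, hx, Pi.zero_apply, norm_zero]

/-- Let `(Gₙ)` be Banach spaces and `πₙ : Gₙ₊₁ → Gₙ` nonexpansive linear operators with the
lifting property: every nonexpansive operator `T : B → Gₙ` from a separable Banach space `B`
factors as `T = πₙ ∘ i` through an isometric embedding `i : B → Gₙ₊₁`.  Assume moreover every
separable Banach space embeds isometrically into `G₀`.  Then every separable Fréchet space `X`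
with an increasing separating sequence of seminorms `(‖·‖ₙ)` admits a linear map
`f : X → ∏ₙ Gₙ` with `‖(f x)ₙ‖ = ‖x‖ₙ` and `πₙ((f x)ₙ₊₁) = (f x)ₙ` for all `n` and `x`;
in particular `f` is injective and preserves all seminorms. -/
theorem embedding_into_inverse_limit
    (G : ℕ → Type*) [∀ n, NormedAddCommGroup (G n)] [∀ n, NormedSpace ℝ (G n)]
    [∀ n, CompleteSpace (G n)]
    (π : ∀ n : ℕ, G (n + 1) →L[ℝ] G n) (hπ : ∀ n, ‖π n‖ ≤ 1)
    -- lifting property of each `πₙ`: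
    (hlift : ∀ (n : ℕ) (B : Type) [NormedAddCommGroup B] [NormedSpace ℝ B] [CompleteSpace B]
      [TopologicalSpace.SeparableSpace B] (T : B →L[ℝ] G n), ‖T‖ ≤ 1 →
      ∃ i : B →ₗ[ℝ] G (n + 1), (∀ b : B, ‖i b‖ = ‖b‖) ∧ ∀ b : B, T b = π n (i b))
    -- every separable Banach space embeds isometrically into `G₀`:
    (huniv : ∀ (B : Type) [NormedAddCommGroup B] [NormedSpace ℝ B] [CompleteSpace B]
      [TopologicalSpace.SeparableSpace B],
      ∃ j : B →ₗ[ℝ] G 0, ∀ b : B, ‖j b‖ = ‖b‖)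
    -- `X` a separable Fréchet space with an increasing separating sequence of seminorms:
    (X : Type*) [AddCommGroup X] [Module ℝ X] [UniformSpace X] [IsUniformAddGroup X]
    [CompleteSpace X] [TopologicalSpace.SeparableSpace X]
    (p : ℕ → Seminorm ℝ X) (hpmono : Monotone p)
    (hpsep : ∀ x : X, (∀ n : ℕ, p n x = 0) → x = 0)
    (hpws : WithSeminorms (𝕜 := ℝ) (E := X) p) :
    ∃ f : X →ₗ[ℝ] (∀ n, G n),
      (∀ (n : ℕ) (x : X), ‖f x n‖ = p n x) ∧
      (∀ (n : ℕ) (x : X), π n (f x (n + 1)) = f x n) ∧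
      Function.Injective f :=
  embedding_into_inverse_limit_general G π hlift huniv X p hpmono hpsep hpws
end
end

section
/- There exists a separable Fréchet space E with an increasing separating sequence of seminorms (‖·‖ᵢ)_{i∈ℕ} such that every separable Fréchet space X with an increasing sequence of seminorms (‖·‖ᵢ)_{i∈ℕ} generating its topology admits a linear map f : X → E with ‖f(x)‖ᵢ = ‖x‖ᵢ for all i ∈ ℕ and x ∈ X; i.e. E is isometrically universal for separable Fréchet spaces. -/
/-- A bundled separable graded Fréchet space: a real vector space with an increasing separating
sequence of seminorms generating its (uniform) topology, complete and separable. -/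
structure SepGradedFrechet where
  carrier : Type
  [acg : AddCommGroup carrier]
  [mod : Module ℝ carrier]
  [unif : UniformSpace carrier]
  [uag : IsUniformAddGroup carrier]
  seminorms : ℕ → Seminorm ℝ carrier
  mono : Monotone seminorms
  separating : ∀ x : carrier, (∀ i : ℕ, seminorms i x = 0) → x = 0
  withSeminorms : WithSeminorms (𝕜 := ℝ) (E := carrier) seminorms
  complete : CompleteSpace carrier
  separable : TopologicalSpace.SeparableSpace carrier

attribute [instance] SepGradedFrechet.acg SepGradedFrechet.mod SepGradedFrechet.unif
  SepGradedFrechet.uag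


/-!
For one continuous seminorm `q` on a separable space, the linear functionals dominated by `q` form
a compact set for pointwise convergence (Tychonoff), and a metrizable one, since evaluation along a
`q`-dense sequence separates its points. By Hahn–Banach, `y ↦ (φ ↦ φ y)` sends `X` into the
continuous functions on this set with sup norm exactly `q y`; precomposing with a continuous
surjection from the Cantor space (Hausdorff–Alexandroff) lands in the fixed space
`C(ℕ → Bool, ℝ)`. Doing this for every `p i` gives a map into `ℕ → C(ℕ → Bool, ℝ)`, and for the
seminorms `v ↦ max_{j ≤ i} ‖v j‖` monotonicity of `p` makes it preserve each of them.
-/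

open Function TopologicalSpace

namespace Seminorm

variable {X : Type*} [AddCommGroup X] [Module ℝ X] (q : Seminorm ℝ X)

theorem exists_dual_abs_le_eq (x : X) :
    ∃ g : Module.Dual ℝ X, (∀ y, |g y| ≤ q y) ∧ g x = q x := by
  -- `c • x ↦ c * q x` is well defined on `ℝ ∙ x`, also when `x = 0`
  have hspan : ∀ c : ℝ, c • x = 0 → c • q x = 0 := fun c hc => by
    have : |c| * q x = 0 := by rw [← Real.norm_eq_abs, ← map_smul_eq_mul q, hc, map_zero]
    exact abs_eq_zero.mp (by rwa [smul_eq_mul, abs_mul, abs_of_nonneg (apply_nonneg q x)])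
  let f := LinearPMap.mkSpanSingleton' (σ := RingHom.id ℝ) x (q x) hspan
  obtain ⟨g, hgf, hgq⟩ := Module.Dual.exists_extension_of_le_seminorm_real f.domain f.toFun
    (p := q) <| by
      rintro ⟨_, hz⟩
      obtain ⟨c, rfl⟩ := Submodule.mem_span_singleton.1 hz
      rw [LinearPMap.toFun_eq_coe, LinearPMap.mkSpanSingleton'_apply, smul_eq_mul,
        map_smul_eq_mul, Real.norm_eq_abs]
      exact mul_le_mul_of_nonneg_right (le_abs_self c) (apply_nonneg q x)
  refine ⟨g, hgq, ?_⟩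
  rw [hgf ⟨x, Submodule.mem_span_singleton_self x⟩]
  exact LinearPMap.mkSpanSingleton'_apply_self _ _ _ _

def dualBall : Set (X → ℝ) :=
  Set.range ((⇑) : Module.Dual ℝ X → X → ℝ) ∩ {φ | ∀ y, |φ y| ≤ q y}

theorem isCompact_dualBall : IsCompact q.dualBall := by
  refine (isCompact_univ_pi fun y => isCompact_Icc (a := -q y) (b := q y)).of_isClosed_subset
    ((LinearMap.isClosed_range_coe X ℝ (.id ℝ)).inter ?_) fun φ hφ y _ => abs_le.mp (hφ.2 y)
  simp only [Set.ofPred_forall]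
  exact isClosed_iInter fun y => isClosed_le (continuous_apply y).abs continuous_const

instance : CompactSpace q.dualBall := isCompact_iff_compactSpace.mp q.isCompact_dualBall

instance : Nonempty q.dualBall := ⟨⟨0, ⟨0, rfl⟩, fun y => by simp⟩⟩

variable {q} in
theorem injOn_comp_dualBall {u : ℕ → X} (hu : ∀ y, ∀ ε > 0, ∃ k, q (y - u k) < ε) :
    Set.InjOn (· ∘ u) q.dualBall := by
  rintro _ ⟨⟨g, rfl⟩, hg⟩ _ ⟨⟨h, rfl⟩, hh⟩ hgh
  funext y
  refine eq_of_forall_dist_le fun ε hε => ?_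
  obtain ⟨k, hk⟩ := hu y (ε / 2) (half_pos hε)
  have hghk : g (u k) = h (u k) := congrFun hgh k
  calc dist (g y) (h y) = |g (y - u k) - h (y - u k)| := by
        rw [Real.dist_eq, map_sub, map_sub, hghk, sub_sub_sub_cancel_right]
    _ ≤ |g (y - u k)| + |h (y - u k)| := abs_sub _ _
    _ ≤ ε := by linarith [hg (y - u k), hh (y - u k)]

variable {q} in
theorem metrizableSpace_dualBall {u : ℕ → X} (hu : ∀ y, ∀ ε > 0, ∃ k, q (y - u k) < ε) :
    MetrizableSpace q.dualBall :=
  (Continuous.isClosedEmbedding (f := fun φ : q.dualBall => φ.1 ∘ u)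
    (continuous_pi fun k => (continuous_apply (u k)).comp continuous_subtype_val)
    (injOn_comp_dualBall hu).injective).isEmbedding.metrizableSpace

def dualBallEval : X →ₗ[ℝ] C(q.dualBall, ℝ) where
  toFun y := ⟨fun φ => φ.1 y, (continuous_apply y).comp continuous_subtype_val⟩
  map_add' y z := by
    ext ⟨_, ⟨g, rfl⟩, _⟩
    exact map_add g y z
  map_smul' c y := by
    ext ⟨_, ⟨g, rfl⟩, _⟩
    exact map_smul g c y

theorem norm_dualBallEval (y : X) : ‖q.dualBallEval y‖ = q y := by
  refine le_antisymm ((ContinuousMap.norm_le _ (apply_nonneg q y)).2 fun φ => φ.2.2 y) ?_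
  obtain ⟨g, hgq, hgy⟩ := q.exists_dual_abs_le_eq y
  calc q y = ‖q.dualBallEval y ⟨g, ⟨g, rfl⟩, hgq⟩‖ := by
        simp [dualBallEval, hgy, abs_of_nonneg (apply_nonneg q y)]
    _ ≤ ‖q.dualBallEval y‖ := ContinuousMap.norm_coe_le_norm _ _

end Seminorm

theorem ContinuousMap.norm_comp_of_surjective {α β E : Type*} [TopologicalSpace α]
    [CompactSpace α] [TopologicalSpace β] [CompactSpace β] [NormedAddCommGroup E] (f : C(β, E))
    {g : C(α, β)} (hg : Surjective g) : ‖f.comp g‖ = ‖f‖ := by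
  refine le_antisymm ((f.comp g).norm_le (norm_nonneg f) |>.2 fun a => f.norm_coe_le_norm (g a))
    (f.norm_le (norm_nonneg _) |>.2 fun b => ?_)
  obtain ⟨a, rfl⟩ := hg b
  exact (f.comp g).norm_coe_le_norm a

namespace Seminorm

variable {X : Type*} [AddCommGroup X] [Module ℝ X] [TopologicalSpace X] [ContinuousSub X]
  [SeparableSpace X] {q : Seminorm ℝ X}

theorem exists_seq_forall_exists_lt (hq : Continuous q) :
    ∃ u : ℕ → X, ∀ y, ∀ ε > 0, ∃ k, q (y - u k) < ε := by
  obtain ⟨u, hu⟩ := exists_dense_seq X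
  exact ⟨u, fun y ε hε => hu.exists_mem_open
    (isOpen_lt (hq.comp (continuous_const.sub continuous_id)) continuous_const)
    ⟨y, by simpa using hε⟩⟩

theorem exists_linearMap_cantor_norm_eq (hq : Continuous q) :
    ∃ F : X →ₗ[ℝ] C(ℕ → Bool, ℝ), ∀ y, ‖F y‖ = q y := by
  obtain ⟨u, hu⟩ := exists_seq_forall_exists_lt hq
  have : MetrizableSpace q.dualBall := metrizableSpace_dualBall hu
  let _ : MetricSpace q.dualBall := metrizableSpaceMetric _
  obtain ⟨σ, hσc, hσs⟩ := exists_nat_bool_continuous_surjective_of_compact q.dualBall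
  refine ⟨(ContinuousMap.compRightAlgHom ℝ ℝ ⟨σ, hσc⟩).toLinearMap ∘ₗ q.dualBallEval, fun y => ?_⟩
  exact ((q.dualBallEval y).norm_comp_of_surjective hσs).trans (q.norm_dualBallEval y)

end Seminorm

section CoordNorm

variable (ι V : Type*) [NormedAddCommGroup V] [NormedSpace ℝ V]

noncomputable def coordNormSeminorm : SeminormFamily ℝ (ι → V) ι :=
  fun j => (normSeminorm ℝ V).comp (LinearMap.proj j)

theorem withSeminorms_coordNormSeminorm : WithSeminorms (coordNormSeminorm ι V) :=
  (withSeminorms_pi (κ := fun _ : ι => Fin 1) fun _ => norm_withSeminorms ℝ V).congr_equiv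
    (Equiv.sigmaUnique ι fun _ => Fin 1).symm

noncomputable def supCoordNormSeminorm : SeminormFamily ℝ (ℕ → V) ℕ :=
  fun i => (Finset.Iic i).sup (coordNormSeminorm ℕ V)

variable {V}

theorem monotone_supCoordNormSeminorm : Monotone (supCoordNormSeminorm V) :=
  fun _ _ hij => Finset.sup_mono (Finset.Iic_subset_Iic.mpr hij)

theorem eq_zero_of_forall_supCoordNormSeminorm_eq_zero (v : ℕ → V)
    (hv : ∀ i, supCoordNormSeminorm V i v = 0) : v = 0 := by
  funext j
  refine norm_le_zero_iff.mp ((hv j).le.trans' ?_)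
  exact Seminorm.le_finset_sup_apply (p := coordNormSeminorm ℕ V) (Finset.mem_Iic.mpr le_rfl)

theorem supCoordNormSeminorm_pi_apply {X : Type*} [AddCommGroup X] [Module ℝ X]
    {p : ℕ → Seminorm ℝ X} (hp : Monotone p) {F : ℕ → X →ₗ[ℝ] V} (hF : ∀ j x, ‖F j x‖ = p j x)
    (i : ℕ) (x : X) : supCoordNormSeminorm V i (LinearMap.pi F x) = p i x := by
  have hcomp : (coordNormSeminorm ℕ V).comp (LinearMap.pi F) = p := by
    funext j
    ext x
    exact hF j x
  rw [← Seminorm.comp_apply, supCoordNormSeminorm, SeminormFamily.finset_sup_comp, hcomp,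
    Finset.sup_Iic_of_monotone hp]

end CoordNorm

noncomputable def cantorFrechet : SepGradedFrechet where
  carrier := ℕ → C(ℕ → Bool, ℝ)
  seminorms := supCoordNormSeminorm _
  mono := monotone_supCoordNormSeminorm
  separating := eq_zero_of_forall_supCoordNormSeminorm_eq_zero
  withSeminorms := (withSeminorms_coordNormSeminorm ℕ _).partial_sups
  complete := inferInstance
  separable := inferInstance

/-- There exists a separable Fréchet space `E` with an increasing separating sequence of
seminorms such that every separable Fréchet space `X` with an increasing sequence of seminorms
generating its topology admits a linear map `f : X → E` preserving all seminorms; i.e. `E` is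
isometrically universal for separable Fréchet spaces. -/
theorem exists_isometrically_universal_separable_frechet :
    ∃ E : SepGradedFrechet,
      ∀ (X : Type) [AddCommGroup X] [Module ℝ X] [UniformSpace X] [IsUniformAddGroup X]
        [CompleteSpace X] [TopologicalSpace.SeparableSpace X]
        (p : ℕ → Seminorm ℝ X), Monotone p → (∀ x : X, (∀ i : ℕ, p i x = 0) → x = 0) →
        WithSeminorms (𝕜 := ℝ) (E := X) p →
        ∃ f : X →ₗ[ℝ] E.carrier, ∀ (i : ℕ) (x : X), E.seminorms i (f x) = p i x := by
  refine ⟨cantorFrechet, fun X _ _ _ _ _ _ p hmono _ hp => ?_⟩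
  choose F hF using fun i => (p i).exists_linearMap_cantor_norm_eq (hp.continuous_seminorm i)
  exact ⟨LinearMap.pi F, supCoordNormSeminorm_pi_apply hmono hF⟩
end

section
/- There is no separable Fréchet space of universal disposition for finite-dimensional graded Fréchet spaces: for every separable Fréchet space E with an increasing separating sequence of seminorms there exist finite-dimensional graded Fréchet spaces X ⊆ Y (X a subspace of Y with the restricted seminorms) and an isometric embedding f₀ : X → E such that no isometric embedding f : Y → E satisfies f ↾ X = f₀. -/
/-!
Let `p = pE 0`. By Baire's theorem, a generic `u ∈ E` is a point at which `p` is almost flat in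
the direction of every member `z` of a dense sequence: `p (u + t z) + p (u - t z) < 2 p u + t`
for some `t > 0`. Then `p` has no corner of slope one at `u`, i.e. no direction `v` with
`p (u + t v) = p u + |t|` for all `t`, because such a `v` is approximated by some `z`.
Now let `Y = ℝ²` with `‖(a, b)‖ᵢ = pEᵢ(u) |a| + |b|`, and embed its first axis by `a ↦ a u`:
an isometric extension to `Y` would send `(0, 1)` to such a corner direction `v`.
-/

open scoped NNReal

theorem LipschitzWith.exists_secondDiff_lt {φ : ℝ → ℝ} {K : ℝ≥0} (hφ : LipschitzWith K φ)
    {σ : ℝ} (hσ : 0 < σ) : ∃ s ∈ Set.Ioo 0 σ, ∃ t > 0, φ (s + t) + φ (s - t) < 2 * φ s + t := by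
  obtain ⟨M, hM⟩ := exists_nat_gt (2 * (K : ℝ))
  set δ := σ / (M + 1) with hδ_def
  have hδ : 0 < δ := by positivity
  set D : ℕ → ℝ := fun k => φ ((k + 1) * δ) - φ (k * δ)
  have hD : ∀ k, |D k| ≤ K * δ := fun k => by
    simpa [D, Real.dist_eq, abs_of_pos hδ, add_mul] using hφ.dist_le_mul ((k + 1) * δ) (k * δ)
  -- If all second differences on the grid `δℕ` were `≥ δ`, the increments `D k` would grow by
  -- `M δ > 2 K δ` along the grid, more than the Lipschitz bound allows.
  by_contra! h
  have hstep : ∀ k < M, δ ≤ D (k + 1) - D k := by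
    intro k hk
    have hk' : ((k : ℝ) + 1) * δ < σ := by
      have : ((k : ℝ) + 1) < M + 1 := by exact_mod_cast Nat.succ_lt_succ hk
      calc ((k : ℝ) + 1) * δ < (M + 1) * δ := by gcongr
        _ = σ := by rw [hδ_def]; field_simp
    have := h ((k + 1) * δ) ⟨by positivity, hk'⟩ δ hδ
    simp only [D]
    push_cast
    ring_nf at this ⊢
    linarith
  have hsum : M * δ ≤ D M - D 0 := by
    rw [← Finset.sum_range_sub D]
    simpa using Finset.card_nsmul_le_sum _ _ δ fun k hk => hstep k (Finset.mem_range.mp hk)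
  have := abs_le.mp (hD M)
  have := abs_le.mp (hD 0)
  nlinarith [mul_lt_mul_of_pos_right hM hδ]

namespace Seminorm

variable {E : Type*} [AddCommGroup E] [Module ℝ E]

def IsAlmostFlatAt (p : Seminorm ℝ E) (x w : E) : Prop :=
  ∃ t > 0, p (x + t • w) + p (x - t • w) < 2 * p x + t

theorem not_isAlmostFlatAt_of_corner {p : Seminorm ℝ E} {u v w : E}
    (hcorner : ∀ t : ℝ, p u + |t| ≤ p (u + t • v)) (hw : p (w - v) ≤ 1 / 2) :
    ¬ p.IsAlmostFlatAt u w := by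
  rintro ⟨t, ht, hlt⟩
  have hshift : ∀ s : ℝ, p u + |s| ≤ p (u + s • w) + |s| * p (w - v) := fun s =>
    calc p u + |s| ≤ p (u + s • v) := hcorner s
      _ = p ((u + s • w) - s • (w - v)) := by congr 1; module
      _ ≤ p (u + s • w) + p (s • (w - v)) := map_sub_le_add p _ _
      _ = p (u + s • w) + |s| * p (w - v) := by rw [map_smul_eq_mul, Real.norm_eq_abs]
  have h₁ := hshift t
  have h₂ := hshift (-t)
  rw [neg_smul, ← sub_eq_add_neg, abs_neg] at h₂
  rw [abs_of_pos ht] at h₁ h₂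
  nlinarith

theorem isOpen_setOf_isAlmostFlatAt [TopologicalSpace E] [IsTopologicalAddGroup E]
    {p : Seminorm ℝ E} (hp : Continuous p) (w : E) : IsOpen {x | p.IsAlmostFlatAt x w} := by
  have hunion : {x | p.IsAlmostFlatAt x w} =
      ⋃ (t : ℝ) (_ : 0 < t), {x | p (x + t • w) + p (x - t • w) < 2 * p x + t} := by
    ext; simp [IsAlmostFlatAt]
  rw [hunion]
  exact isOpen_iUnion fun t => isOpen_iUnion fun _ => isOpen_lt
    ((hp.comp (continuous_add_const _)).add (hp.comp (continuous_sub_right _)))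
    ((continuous_const.mul hp).add continuous_const)

theorem dense_setOf_isAlmostFlatAt [TopologicalSpace E] [ContinuousAdd E] [ContinuousSMul ℝ E]
    (p : Seminorm ℝ E) (w : E) : Dense {x | p.IsAlmostFlatAt x w} := by
  rw [dense_iff_inter_open]
  rintro U hU ⟨x₀, hx₀⟩
  let line : ℝ → E := fun s => x₀ + s • w
  have hline : line ⁻¹' U ∈ nhds 0 :=
    (by fun_prop : Continuous line).continuousAt.preimage_mem_nhds
      (hU.mem_nhds (by simpa [line] using hx₀))
  obtain ⟨σ, hσ, hball⟩ := Metric.mem_nhds_iff.mp hline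
  have hlip : LipschitzWith (p w).toNNReal (p ∘ line) :=
    LipschitzWith.of_dist_le_mul fun a b => by
      rw [Real.coe_toNNReal _ (apply_nonneg p w), Real.dist_eq, Real.dist_eq]
      calc |p (line a) - p (line b)| ≤ p (line a - line b) := abs_sub_map_le_sub p _ _
        _ = p w * |a - b| := by simp [line, ← sub_smul, map_smul_eq_mul, mul_comm]
  obtain ⟨s, hs, t, ht, hflat⟩ := hlip.exists_secondDiff_lt hσ
  refine ⟨line s, hball ?_, t, ht, ?_⟩
  · rw [Metric.mem_ball, Real.dist_eq, sub_zero, abs_of_pos hs.1]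
    exact hs.2
  · have e₁ : line s + t • w = line (s + t) := by simp only [line]; module
    have e₂ : line s - t • w = line (s - t) := by simp only [line]; module
    rwa [e₁, e₂]

theorem exists_mem_forall_not_corner [TopologicalSpace E] [IsTopologicalAddGroup E]
    [ContinuousSMul ℝ E] [TopologicalSpace.SeparableSpace E] [BaireSpace E]
    {p : Seminorm ℝ E} (hp : Continuous p) {U : Set E} (hU : IsOpen U) (hne : U.Nonempty) :
    ∃ u ∈ U, ∀ v : E, ¬ ∀ t : ℝ, p u + |t| ≤ p (u + t • v) := by
  obtain ⟨z, hz⟩ := TopologicalSpace.exists_dense_seq E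
  have hflat : Dense (⋂ n, {x | p.IsAlmostFlatAt x (z n)}) :=
    dense_iInter_of_isOpen (fun n => isOpen_setOf_isAlmostFlatAt hp (z n))
      (fun n => dense_setOf_isAlmostFlatAt p (z n))
  obtain ⟨u, hu, huU⟩ := hflat.exists_mem_open hU hne
  refine ⟨u, huU, fun v hcorner => ?_⟩
  obtain ⟨n, hn⟩ := hz.exists_mem_open
    (isOpen_lt (hp.comp (continuous_sub_right v)) continuous_const)
    (⟨v, by simp⟩ : {w | p (w - v) < 1 / 2}.Nonempty)
  exact not_isAlmostFlatAt_of_corner hcorner (le_of_lt hn) (Set.mem_iInter.mp hu n)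

end Seminorm

theorem WithSeminorms.baireSpace {𝕜 E ι : Type*} [NontriviallyNormedField 𝕜] [AddCommGroup E]
    [Module 𝕜 E] [Countable ι] [UniformSpace E] [IsUniformAddGroup E] [CompleteSpace E]
    {p : SeminormFamily 𝕜 E ι} (hp : WithSeminorms p) : BaireSpace E :=
  have := hp.firstCountableTopology
  have := IsUniformAddGroup.uniformity_countably_generated (α := E)
  inferInstance

noncomputable def weightedL1Seminorm (c : ℝ≥0) : Seminorm ℝ (ℝ × ℝ) :=
  c • (normSeminorm ℝ ℝ).comp (LinearMap.fst ℝ ℝ ℝ) + (normSeminorm ℝ ℝ).comp (LinearMap.snd ℝ ℝ ℝ)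

@[simp]
theorem weightedL1Seminorm_apply (c : ℝ≥0) (x : ℝ × ℝ) :
    weightedL1Seminorm c x = c * |x.1| + |x.2| := by
  simp [weightedL1Seminorm, Real.norm_eq_abs, NNReal.smul_def]

namespace FinGradedFrechet

noncomputable abbrev weightedL1Plane (c : ℕ → ℝ≥0) (hc : Monotone c) (hc₀ : ∃ i, c i ≠ 0) :
    FinGradedFrechet where
  carrier := ℝ × ℝ
  seminorms i := weightedL1Seminorm (c i)
  mono i j hij x := by
    simp only [weightedL1Seminorm_apply]
    gcongr
    exact hc hij
  separating x hx := by
    obtain ⟨i, hi⟩ := hc₀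
    have := hx i
    rw [weightedL1Seminorm_apply, add_eq_zero_iff_of_nonneg (by positivity) (abs_nonneg _),
      mul_eq_zero] at this
    simp_all [Prod.ext_iff]

variable {E : Type*} [AddCommGroup E] [Module ℝ E]

/-- The ℓ¹-sum `ℝ u ⊕₁ ℝ` of the line spanned by `u` (with the seminorms `pᵢ`) and a new line. -/
noncomputable abbrev spanL1Line (p : ℕ → Seminorm ℝ E) (hp : Monotone p) (u : E)
    (hu : ∃ i, p i u ≠ 0) : FinGradedFrechet :=
  weightedL1Plane (fun i => (p i u).toNNReal) (fun _ _ hij => Real.toNNReal_le_toNNReal (hp hij u))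
    (by simpa using hu.imp fun i hi => (apply_nonneg (p i) u).lt_of_ne' hi)

noncomputable def firstAxisToSpan (u : E) : LinearMap.ker (LinearMap.snd ℝ ℝ ℝ) →ₗ[ℝ] E :=
  LinearMap.toSpanSingleton ℝ E u ∘ₗ LinearMap.fst ℝ ℝ ℝ ∘ₗ Submodule.subtype _

variable {p : ℕ → Seminorm ℝ E} {hp : Monotone p} {u : E} {hu : ∃ i, p i u ≠ 0}

theorem seminorm_firstAxisToSpan (i : ℕ) (x : LinearMap.ker (LinearMap.snd ℝ ℝ ℝ)) :
    p i (firstAxisToSpan u x) = (spanL1Line p hp u hu).seminorms i x := by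
  obtain ⟨⟨a, b⟩, hb⟩ := x
  obtain rfl : b = 0 := hb
  simp [firstAxisToSpan, map_smul_eq_mul, mul_comm]

theorem corner_of_isometric_extension (f : (spanL1Line p hp u hu).carrier →ₗ[ℝ] E)
    (hext : ∀ x : LinearMap.ker (LinearMap.snd ℝ ℝ ℝ), f x = firstAxisToSpan u x)
    (hiso : ∀ i y, p i (f y) = (spanL1Line p hp u hu).seminorms i y) (t : ℝ) :
    p 0 u + |t| ≤ p 0 (u + t • f (0, 1)) := by
  have hfu : f (1, 0) = u := by simpa [firstAxisToSpan] using hext ⟨(1, 0), by simp⟩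
  have hdecomp : ((1, t) : ℝ × ℝ) = (1, 0) + t • (0, 1) := by simp
  have hline : f (1, t) = u + t • f (0, 1) := by rw [hdecomp, map_add, map_smul, hfu]
  simp [← hline, hiso]

end FinGradedFrechet

/-- There is no separable Fréchet space of universal disposition for finite-dimensional graded
Fréchet spaces: for every separable Fréchet space `E` with an increasing separating sequence of
seminorms there exist finite-dimensional graded Fréchet spaces `X ⊆ Y` and an isometric
embedding `f₀ : X → E` which extends to no isometric embedding `f : Y → E`. -/
theorem no_separable_frechet_of_universal_disposition
    (E : Type*) [AddCommGroup E] [Module ℝ E] [UniformSpace E] [IsUniformAddGroup E]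
    [CompleteSpace E] [TopologicalSpace.SeparableSpace E]
    (pE : ℕ → Seminorm ℝ E) (hEmono : Monotone pE)
    (hEsep : ∀ x : E, (∀ i : ℕ, pE i x = 0) → x = 0)
    (hEws : WithSeminorms (𝕜 := ℝ) (E := E) pE) :
    ∃ (Y : FinGradedFrechet) (X : Submodule ℝ Y.carrier) (f₀ : X →ₗ[ℝ] E),
      (∀ (i : ℕ) (x : X), pE i (f₀ x) = Y.seminorms i (x : Y.carrier)) ∧
      ¬ ∃ f : Y.carrier →ₗ[ℝ] E,
          (∀ x : X, f (x : Y.carrier) = f₀ x) ∧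
          ∀ (i : ℕ) (y : Y.carrier), pE i (f y) = Y.seminorms i y := by
  rcases subsingleton_or_nontrivial E with hE | hE
  · refine ⟨.weightedL1Plane 1 monotone_const ⟨0, one_ne_zero⟩, ⊥, 0, ?_, ?_⟩
    · rintro i ⟨x, hx⟩
      obtain rfl : x = 0 := hx
      simp
    · rintro ⟨f, -, hiso⟩
      simpa [Subsingleton.elim (f (0, 1)) 0] using hiso 0 (0, 1)
  obtain ⟨u₀, hu₀⟩ := exists_ne (0 : E)
  obtain ⟨i₀, hi₀⟩ : ∃ i, pE i u₀ ≠ 0 := not_forall.mp (mt (hEsep u₀) hu₀)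
  have := hEws.continuousSMul
  have := hEws.baireSpace
  obtain ⟨u, hu_pos, hu⟩ := Seminorm.exists_mem_forall_not_corner (hEws.continuous_seminorm 0)
    (isOpen_lt continuous_const (hEws.continuous_seminorm i₀))
    ⟨u₀, (apply_nonneg _ _).lt_of_ne' hi₀⟩
  refine ⟨.spanL1Line pE hEmono u ⟨i₀, hu_pos.ne'⟩, _, FinGradedFrechet.firstAxisToSpan u,
    FinGradedFrechet.seminorm_firstAxisToSpan, ?_⟩
  rintro ⟨f, hext, hiso⟩
  exact hu (f (0, 1)) (FinGradedFrechet.corner_of_isometric_extension f hext hiso)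
end

section
/- Let G be a Banach space of almost universal disposition for finite-dimensional normed spaces and equip E = ∏_{n∈ℕ} G with the sequence of seminorms ‖x‖ₙ' = ‖x(n)‖_G (not necessarily increasing). Let X and Y be finite-dimensional real vector spaces with fixed separating sequences of seminorms (‖·‖ᵢ)_{i∈ℕ}, let ι : X → Y be an isometric embedding and f₀ : X → E an isometric embedding. Then for every ε > 0 there exists an ε-isometric embedding f : Y → E with f ∘ ι = f₀. -/
/-!
Work one coordinate at a time. A single seminorm `p` on the finite-dimensional space `Y` is a
norm on the separation quotient of `Y`, and `x ↦ f₀ x i` is an isometry from the image of `X`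
in that quotient into `G`. Almost universal disposition extends it to an `ε`-isometric
embedding of the quotient, i.e. a map `φ i : Y → G` with `(1 + ε)⁻¹ p ≤ ‖φ i ·‖ ≤ (1 + ε) p`.
Then `f = (φ i)ᵢ` works, and it is injective because the seminorms `pY i` separate points.
-/

namespace Seminorm

variable {Y : Type*} [AddCommGroup Y] [Module ℝ Y] [FiniteDimensional ℝ Y]

/-- A copy of `Y` in `Type` carrying the seminorm `p`: the disposition hypothesis only
quantifies over spaces in `Type`. -/
def Model (_p : Seminorm ℝ Y) : Type := Fin (Module.finrank ℝ Y) → ℝ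

variable (p : Seminorm ℝ Y)

instance : AddCommGroup p.Model := inferInstanceAs (AddCommGroup (Fin _ → ℝ))

noncomputable instance : Module ℝ p.Model := inferInstanceAs (Module ℝ (Fin _ → ℝ))

instance : FiniteDimensional ℝ p.Model := inferInstanceAs (FiniteDimensional ℝ (Fin _ → ℝ))

noncomputable def modelEquiv : Y ≃ₗ[ℝ] p.Model := (Module.finBasis ℝ Y).equivFun

noncomputable instance : SeminormedAddCommGroup p.Model :=
  (p.comp p.modelEquiv.symm.toLinearMap).toAddGroupSeminorm.toSeminormedAddCommGroup

theorem norm_modelEquiv (y : Y) : ‖p.modelEquiv y‖ = p y := by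
  show p (p.modelEquiv.symm (p.modelEquiv y)) = p y
  rw [LinearEquiv.symm_apply_apply]

noncomputable instance : NormedSpace ℝ p.Model :=
  ⟨fun r v => (map_smul_eq_mul (p.comp p.modelEquiv.symm.toLinearMap) r v).le⟩

theorem exists_normedSpace_linearMap_norm_eq :
    ∃ (F : Type) (_ : NormedAddCommGroup F) (_ : NormedSpace ℝ F) (_ : FiniteDimensional ℝ F)
      (π : Y →ₗ[ℝ] F), ∀ y, ‖π y‖ = p y :=
  ⟨SeparationQuotient p.Model, inferInstance, inferInstance, inferInstance,
    (SeparationQuotient.mkCLM ℝ p.Model).toLinearMap ∘ₗ p.modelEquiv.toLinearMap,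
    fun y => (SeparationQuotient.norm_mk _).trans (p.norm_modelEquiv y)⟩

end Seminorm

def HasAlmostIsometricExtensions (G : Type*) [NormedAddCommGroup G] [NormedSpace ℝ G] (ε : ℝ) :
    Prop :=
  ∀ (F : Type) [NormedAddCommGroup F] [NormedSpace ℝ F] [FiniteDimensional ℝ F]
    (E : Submodule ℝ F) (e : E →ₗ[ℝ] G), (∀ x : E, ‖e x‖ = ‖x‖) →
    ∃ f : F →ₗ[ℝ] G, (∀ x : E, f (x : F) = e x) ∧
      ∀ y : F, (1 + ε)⁻¹ * ‖y‖ ≤ ‖f y‖ ∧ ‖f y‖ ≤ (1 + ε) * ‖y‖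

namespace HasAlmostIsometricExtensions

variable {G : Type*} [NormedAddCommGroup G] [NormedSpace ℝ G] {ε : ℝ}
  {X : Type*} [AddCommGroup X] [Module ℝ X]

theorem exists_comp_eq {F : Type} [NormedAddCommGroup F] [NormedSpace ℝ F]
    [FiniteDimensional ℝ F] (hG : HasAlmostIsometricExtensions G ε)
    (g : X →ₗ[ℝ] F) (c : X →ₗ[ℝ] G) (hc : ∀ x, ‖c x‖ = ‖g x‖) :
    ∃ f : F →ₗ[ℝ] G, f ∘ₗ g = c ∧
      ∀ y, (1 + ε)⁻¹ * ‖y‖ ≤ ‖f y‖ ∧ ‖f y‖ ≤ (1 + ε) * ‖y‖ := by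
  have hker : LinearMap.ker g ≤ LinearMap.ker c := fun x hx => by
    rw [LinearMap.mem_ker, ← norm_eq_zero, hc, LinearMap.mem_ker.mp hx, norm_zero]
  let e : LinearMap.range g →ₗ[ℝ] G :=
    (LinearMap.ker g).liftQ c hker ∘ₗ g.quotKerEquivRange.symm.toLinearMap
  have he : ∀ x, e ⟨g x, LinearMap.mem_range_self g x⟩ = c x := fun x => by
    simp [e, LinearMap.quotKerEquivRange_symm_apply_image]
  obtain ⟨f, hfe, hf⟩ := hG F _ e <| by
    rintro ⟨_, x, rfl⟩
    exact (he x).symm ▸ hc x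
  exact ⟨f, LinearMap.ext fun x => (hfe _).trans (he x), hf⟩

theorem exists_comp_eq_of_seminorm {Y : Type*} [AddCommGroup Y] [Module ℝ Y]
    [FiniteDimensional ℝ Y] (hG : HasAlmostIsometricExtensions G ε) (p : Seminorm ℝ Y)
    (ι : X →ₗ[ℝ] Y) (c : X →ₗ[ℝ] G) (hc : ∀ x, ‖c x‖ = p (ι x)) :
    ∃ f : Y →ₗ[ℝ] G, f ∘ₗ ι = c ∧
      ∀ y, (1 + ε)⁻¹ * p y ≤ ‖f y‖ ∧ ‖f y‖ ≤ (1 + ε) * p y := by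
  obtain ⟨F, _, _, _, π, hπ⟩ := p.exists_normedSpace_linearMap_norm_eq
  obtain ⟨f, hfc, hf⟩ := hG.exists_comp_eq (π ∘ₗ ι) c fun x => (hc x).trans (hπ _).symm
  exact ⟨f ∘ₗ π, hfc, fun y => hπ y ▸ hf (π y)⟩

end HasAlmostIsometricExtensions

theorem product_almost_universal_disposition_unordered_general
    (G : Type*) [NormedAddCommGroup G] [NormedSpace ℝ G]
    -- `G` is of almost universal disposition for finite-dimensional normed spaces:
    (hG : ∀ ε : ℝ, 0 < ε →
      ∀ (F : Type) [NormedAddCommGroup F] [NormedSpace ℝ F] [FiniteDimensional ℝ F]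
        (E : Submodule ℝ F) (e : E →ₗ[ℝ] G), (∀ x : E, ‖e x‖ = ‖x‖) →
        ∃ f : F →ₗ[ℝ] G, (∀ x : E, f (x : F) = e x) ∧
          ∀ y : F, (1 + ε)⁻¹ * ‖y‖ ≤ ‖f y‖ ∧ ‖f y‖ ≤ (1 + ε) * ‖y‖)
    (X : Type*) [AddCommGroup X] [Module ℝ X]
    (pX : ℕ → Seminorm ℝ X)
    (Y : Type*) [AddCommGroup Y] [Module ℝ Y] [FiniteDimensional ℝ Y]
    (pY : ℕ → Seminorm ℝ Y) (hYsep : ∀ y : Y, (∀ i : ℕ, pY i y = 0) → y = 0)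
    (ι : X →ₗ[ℝ] Y) (hι : ∀ (i : ℕ) (x : X), pY i (ι x) = pX i x)
    (f₀ : X →ₗ[ℝ] (ℕ → G)) (hf₀ : ∀ (i : ℕ) (x : X), ‖f₀ x i‖ = pX i x)
    (ε : ℝ) (hε : 0 < ε) :
    ∃ f : Y →ₗ[ℝ] (ℕ → G),
      Function.Injective f ∧
      (∀ x : X, f (ι x) = f₀ x) ∧
      ∀ (i : ℕ) (y : Y), (1 + ε)⁻¹ * pY i y ≤ ‖f y i‖ ∧ ‖f y i‖ ≤ (1 + ε) * pY i y := by
  have hGε : HasAlmostIsometricExtensions G ε := hG ε hε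
  choose φ hφι hφ using fun i => hGε.exists_comp_eq_of_seminorm (pY i) ι
    (LinearMap.proj i ∘ₗ f₀) fun x => (hf₀ i x).trans (hι i x).symm
  refine ⟨LinearMap.pi φ, ?_, fun x => funext fun i => LinearMap.congr_fun (hφι i) x, hφ⟩
  rw [← LinearMap.ker_eq_bot, LinearMap.ker_eq_bot']
  refine fun y hy => hYsep y fun i => le_antisymm ?_ (apply_nonneg _ y)
  have hlow := (hφ i y).1
  rw [show φ i y = 0 from congr_fun hy i, norm_zero] at hlow
  exact nonpos_of_mul_nonpos_right hlow (by positivity)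

/-- Let `G` be a Banach space of almost universal disposition for finite-dimensional normed
spaces and equip `E = ∏_{n ∈ ℕ} G` with the seminorms `‖x‖ₙ' = ‖x n‖` (not necessarily
increasing).  Let `X` and `Y` be finite-dimensional real vector spaces with fixed separating
sequences of seminorms, `ι : X → Y` an isometric embedding and `f₀ : X → E` an isometric
embedding.  Then for every `ε > 0` there is an `ε`-isometric embedding `f : Y → E` with
`f ∘ ι = f₀`. -/
theorem product_almost_universal_disposition_unordered
    (G : Type*) [NormedAddCommGroup G] [NormedSpace ℝ G] [CompleteSpace G]
    -- `G` is of almost universal disposition for finite-dimensional normed spaces: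
    (hG : ∀ ε : ℝ, 0 < ε →
      ∀ (F : Type) [NormedAddCommGroup F] [NormedSpace ℝ F] [FiniteDimensional ℝ F]
        (E : Submodule ℝ F) (e : E →ₗ[ℝ] G), (∀ x : E, ‖e x‖ = ‖x‖) →
        ∃ f : F →ₗ[ℝ] G, (∀ x : E, f (x : F) = e x) ∧
          ∀ y : F, (1 + ε)⁻¹ * ‖y‖ ≤ ‖f y‖ ∧ ‖f y‖ ≤ (1 + ε) * ‖y‖)
    (X : Type*) [AddCommGroup X] [Module ℝ X] [FiniteDimensional ℝ X]
    (pX : ℕ → Seminorm ℝ X) (hXsep : ∀ x : X, (∀ i : ℕ, pX i x = 0) → x = 0)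
    (Y : Type*) [AddCommGroup Y] [Module ℝ Y] [FiniteDimensional ℝ Y]
    (pY : ℕ → Seminorm ℝ Y) (hYsep : ∀ y : Y, (∀ i : ℕ, pY i y = 0) → y = 0)
    (ι : X →ₗ[ℝ] Y) (hι : ∀ (i : ℕ) (x : X), pY i (ι x) = pX i x)
    (f₀ : X →ₗ[ℝ] (ℕ → G)) (hf₀ : ∀ (i : ℕ) (x : X), ‖f₀ x i‖ = pX i x)
    (ε : ℝ) (hε : 0 < ε) :
    ∃ f : Y →ₗ[ℝ] (ℕ → G),
      Function.Injective f ∧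
      (∀ x : X, f (ι x) = f₀ x) ∧
      ∀ (i : ℕ) (y : Y), (1 + ε)⁻¹ * pY i y ≤ ‖f y i‖ ∧ ‖f y i‖ ≤ (1 + ε) * pY i y :=
  product_almost_universal_disposition_unordered_general G hG X pX Y pY hYsep ι hι f₀ hf₀ ε hε
end
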